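/- arXiv:math/9902154 — 5 statements merged into one kernel-verified Lean document; each statement's English description precedes it below -/
import Mathlib

section
/- If three points θ₁, θ₂, θ₃ on the boundary of the unit disk (parametrized by angles in ℝ/ℤ) have pairwise angular distance at least ε > 0, then the Euclidean area of the triangle with vertices e^{2πiθ₁}, e^{2πiθ₂}, e^{2πiθ₃} is bounded below by a positive constant depending only on ε. -/
open Set Metric Filter Topology MeasureTheory

/-!
The triangle `z₁ z₂ z₃` is a translate of the image of the triangle `0 1 i` under a real
linear map of determinant `Im (conj (z₂ - z₁) * (z₃ - z₁))`, so its area is a fixed positive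
multiple of the absolute value of this cross product. For a triangle inscribed in the unit circle this cross
product equals half the product of the side lengths (the identity `abc = 4R · area` with
`R = 1`), and by Jordan's inequality `sin x ≥ 2x/π` on `[0, π/2]` the chord between
`e^{2πiθ}` and `e^{2πiφ}` has length at least `4 · dist θ φ` in `ℝ/ℤ`. Hence the area is at
least a constant times `ε³`.
-/

open ComplexConjugate Pointwise

open Real in
theorem two_mul_abs_le_abs_sin_pi_mul {r : ℝ} (hr : |r| ≤ 1 / 2) : 2 * |r| ≤ |sin (π * r)| :=
  calc 2 * |r| = 2 / π * (π * |r|) := by field_simp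
    _ ≤ sin (π * |r|) := mul_le_sin (by positivity) (by nlinarith [pi_pos])
    _ ≤ |sin (π * |r|)| := le_abs_self _
    _ = |sin (π * r)| := by
      rcases abs_choice r with h | h <;> simp only [h, mul_neg, sin_neg, abs_neg]

namespace Complex

/-- Twice the signed area of the triangle `0, u, v`. -/
def cross (u v : ℂ) : ℝ := (conj u * v).im

theorem volume_convexHull_triple_eq (z₁ z₂ z₃ : ℂ) :
    volume (convexHull ℝ {z₁, z₂, z₃})
      = ENNReal.ofReal |cross (z₂ - z₁) (z₃ - z₁)| * volume (convexHull ℝ {0, 1, I}) := by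
  set L : ℂ →ₗ[ℝ] ℂ := reLm.smulRight (z₂ - z₁) + imLm.smulRight (z₃ - z₁)
  have hL1 : L 1 = z₂ - z₁ := by simp [L]
  have hLI : L I = z₃ - z₁ := by simp [L]
  have himage : L '' {0, 1, I} = {0, z₂ - z₁, z₃ - z₁} := by
    simp [Set.image_insert_eq, hL1, hLI]
  have htranslate : ({z₁, z₂, z₃} : Set ℂ) = z₁ +ᵥ ({0, z₂ - z₁, z₃ - z₁} : Set ℂ) := by
    simp [vadd_set_insert]
  have hdet : LinearMap.det L = cross (z₂ - z₁) (z₃ - z₁) := by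
    rw [← LinearMap.det_toMatrix basisOneI, Matrix.det_fin_two]
    simp only [LinearMap.toMatrix_apply, coe_basisOneI, coe_basisOneI_repr, Matrix.cons_val_zero,
      Matrix.cons_val_one, Matrix.cons_val_fin_one, hL1, hLI, cross, mul_im, conj_re, conj_im]
    ring
  rw [htranslate, convexHull_vadd, measure_vadd, ← himage, ← L.image_convexHull,
    Measure.addHaar_image_linearMap, hdet]

theorem volume_convexHull_zero_one_I_pos : 0 < volume (convexHull ℝ {0, 1, I}) := by
  have hspan : affineSpan ℝ ({0, 1, I} : Set ℂ) = ⊤ := by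
    rw [AffineSubspace.affineSpan_eq_top_iff_vectorSpan_eq_top_of_nonempty ℝ ℂ ℂ
      (insert_nonempty _ _), vectorSpan_eq_span_vsub_set_right ℝ (mem_insert 0 _)]
    simpa using RCLike.span_one_I ℂ
  obtain ⟨x, hx⟩ := interior_convexHull_nonempty_iff_affineSpan_eq_top.2 hspan
  exact (isOpen_interior.measure_pos volume ⟨x, hx⟩).trans_le (measure_mono interior_subset)

theorem volume_convexHull_zero_one_I_lt_top : volume (convexHull ℝ {0, 1, I}) < ⊤ :=
  (Set.Finite.isCompact_convexHull ℝ (Set.toFinite _)).measure_lt_top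

theorem norm_sub_mul_norm_sub_mul_norm_sub_of_norm_eq_one {z₁ z₂ z₃ : ℂ}
    (h₁ : ‖z₁‖ = 1) (h₂ : ‖z₂‖ = 1) (h₃ : ‖z₃‖ = 1) :
    ‖z₁ - z₂‖ * ‖z₂ - z₃‖ * ‖z₁ - z₃‖ = 2 * |cross (z₂ - z₁) (z₃ - z₁)| := by
  have hne : ∀ {z : ℂ}, ‖z‖ = 1 → z ≠ 0 := fun hz h => by simp [h] at hz
  have key : ((2 * cross (z₂ - z₁) (z₃ - z₁) : ℝ) : ℂ) * I
      = (z₁ - z₂) * (z₂ - z₃) * (z₁ - z₃) / (z₁ * z₂ * z₃) := by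
    rw [cross, ← sub_conj]
    simp only [map_mul, map_sub, map_inv₀, inv_inv, ← inv_eq_conj h₁, ← inv_eq_conj h₂,
      ← inv_eq_conj h₃]
    field_simp [hne h₁, hne h₂, hne h₃]
    ring
  have := congrArg norm key
  simp only [norm_mul, norm_I, mul_one, norm_real, norm_div, h₁, h₂, h₃, div_one,
    Real.norm_eq_abs, abs_two] at this
  exact this.symm

theorem four_mul_dist_le_norm_exp_sub_exp (θ φ : ℝ) :
    4 * dist (θ : UnitAddCircle) φ ≤
      ‖exp (2 * Real.pi * θ * I) - exp (2 * Real.pi * φ * I)‖ := by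
  set r := θ - φ - round (θ - φ)
  have hdist : dist (θ : UnitAddCircle) φ = |r| := by
    rw [dist_eq_norm, ← AddCircle.coe_sub, UnitAddCircle.norm_eq]
  have hexp : exp (2 * Real.pi * θ * I) - exp (2 * Real.pi * φ * I)
      = exp (2 * Real.pi * φ * I) * (exp (I * ↑(2 * Real.pi * r)) - 1) := by
    rw [mul_sub, mul_one, ← exp_add, ← mul_one (exp (_ + _)),
      ← exp_int_mul_two_pi_mul_I (round (θ - φ)), ← exp_add]
    congr 2
    simp only [r]
    push_cast
    ring
  have hunit : ‖exp (2 * Real.pi * φ * I)‖ = 1 := by simp [norm_exp]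
  rw [hdist, hexp, norm_mul, hunit, one_mul, norm_exp_I_mul_ofReal_sub_one,
    norm_mul, Real.norm_eq_abs, Real.norm_eq_abs, abs_two,
    show 2 * Real.pi * r / 2 = Real.pi * r by ring]
  linarith [two_mul_abs_le_abs_sin_pi_mul (abs_sub_round (θ - φ))]

theorem thirty_two_mul_dist_mul_dist_mul_dist_le_abs_cross (θ₁ θ₂ θ₃ : ℝ) :
    32 * (dist (θ₁ : UnitAddCircle) θ₂ * dist (θ₂ : UnitAddCircle) θ₃
      * dist (θ₁ : UnitAddCircle) θ₃) ≤
      |cross (exp (2 * Real.pi * θ₂ * I) - exp (2 * Real.pi * θ₁ * I))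
        (exp (2 * Real.pi * θ₃ * I) - exp (2 * Real.pi * θ₁ * I))| := by
  have hunit (θ : ℝ) : ‖exp (2 * Real.pi * θ * I)‖ = 1 := by simp [norm_exp]
  have h12 := four_mul_dist_le_norm_exp_sub_exp θ₁ θ₂
  have h23 := four_mul_dist_le_norm_exp_sub_exp θ₂ θ₃
  have h13 := four_mul_dist_le_norm_exp_sub_exp θ₁ θ₃
  calc 32 * (dist (θ₁ : UnitAddCircle) θ₂ * dist (θ₂ : UnitAddCircle) θ₃
        * dist (θ₁ : UnitAddCircle) θ₃)
      = 4 * dist (θ₁ : UnitAddCircle) θ₂ * (4 * dist (θ₂ : UnitAddCircle) θ₃)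
        * (4 * dist (θ₁ : UnitAddCircle) θ₃) / 2 := by ring
    _ ≤ ‖exp (2 * Real.pi * θ₁ * I) - exp (2 * Real.pi * θ₂ * I)‖
        * ‖exp (2 * Real.pi * θ₂ * I) - exp (2 * Real.pi * θ₃ * I)‖
        * ‖exp (2 * Real.pi * θ₁ * I) - exp (2 * Real.pi * θ₃ * I)‖ / 2 := by gcongr
    _ = _ := by
      rw [norm_sub_mul_norm_sub_mul_norm_sub_of_norm_eq_one (hunit θ₁) (hunit θ₂) (hunit θ₃)]
      ring

end Complex

/-- If three points on the unit circle, given by angles `θ₁, θ₂, θ₃` (in turns), have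
pairwise angular distance at least `ε > 0` in `ℝ/ℤ`, then the Euclidean area of the
triangle with vertices `e^{2πiθ₁}, e^{2πiθ₂}, e^{2πiθ₃}` is bounded below by a positive
constant depending only on `ε`. -/
theorem triangle_area_lower_bound (ε : ℝ) (hε : 0 < ε) :
    ∃ c : ℝ, 0 < c ∧ ∀ θ₁ θ₂ θ₃ : ℝ,
      ε ≤ dist (θ₁ : AddCircle (1 : ℝ)) (θ₂ : AddCircle (1 : ℝ)) →
      ε ≤ dist (θ₂ : AddCircle (1 : ℝ)) (θ₃ : AddCircle (1 : ℝ)) →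
      ε ≤ dist (θ₁ : AddCircle (1 : ℝ)) (θ₃ : AddCircle (1 : ℝ)) →
      ENNReal.ofReal c ≤
        volume (convexHull ℝ
          ({Complex.exp (2 * Real.pi * θ₁ * Complex.I),
            Complex.exp (2 * Real.pi * θ₂ * Complex.I),
            Complex.exp (2 * Real.pi * θ₃ * Complex.I)} : Set ℂ)) := by
  set T := volume (convexHull ℝ ({0, 1, Complex.I} : Set ℂ))
  have hT : 0 < T.toReal := ENNReal.toReal_pos Complex.volume_convexHull_zero_one_I_pos.ne'
    Complex.volume_convexHull_zero_one_I_lt_top.ne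
  refine ⟨32 * ε ^ 3 * T.toReal, by positivity, fun θ₁ θ₂ θ₃ h12 h23 h13 => ?_⟩
  have hdist : 32 * ε ^ 3 ≤ 32 * (dist (θ₁ : UnitAddCircle) θ₂ * dist (θ₂ : UnitAddCircle) θ₃
      * dist (θ₁ : UnitAddCircle) θ₃) :=
    calc 32 * ε ^ 3 = 32 * (ε * ε * ε) := by ring
      _ ≤ _ := by gcongr
  rw [Complex.volume_convexHull_triple_eq, ENNReal.ofReal_mul (by positivity),
    ENNReal.ofReal_toReal Complex.volume_convexHull_zero_one_I_lt_top.ne]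
  gcongr
  exact hdist.trans (Complex.thirty_two_mul_dist_mul_dist_mul_dist_le_abs_cross θ₁ θ₂ θ₃)
end

section
/- Let K ⊂ ℂ be compact, connected, full, and locally connected, and let K₀ be the closure of a connected component of the interior of K. The canonical projection (retraction) of K onto K₀, which fixes K₀ and sends each z' ∈ K ∖ K₀ to the unique boundary point of K₀ through which all paths from z' into K₀ must pass, takes values in an at most countable subset of ∂K₀ on K ∖ K₀. -/
open Set Metric Filter Topology

/-- A set is full if its complement has no bounded connected components. -/
def IsFull (K : Set ℂ) : Prop :=
  ∀ w ∉ K, ¬ Bornology.IsBounded (connectedComponentIn Kᶜ w)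

/-- `γ` is a path in `K` from `a` to `b`, parametrized over `[0,1]`. -/
def IsPathIn (K : Set ℂ) (γ : ℝ → ℂ) (a b : ℂ) : Prop :=
  ContinuousOn γ (Set.Icc 0 1) ∧ γ 0 = a ∧ γ 1 = b ∧ γ '' Set.Icc 0 1 ⊆ K

/-!
Points of `K ∖ K₀` lying in one connected component of `K ∖ K₀` have the same projection: a path
between them inside `K ∖ K₀` misses `∂K₀ ⊆ K₀`, so the projection of either point separates the
other one from the interior of `K₀`. Two distinct separating points `p, q ∈ ∂K₀` cannot exist:
follow a path towards the interior of `K₀` until it first meets `{p, q}`, say at `p`, and go on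
inside `K₀ ∖ {q}`, which is connected because `K₀` is the closure of a connected open set. The
components of `K ∖ K₀` are relatively open in the locally connected set `K`, so each of them
contains a point of a countable dense subset of `K`.

The paths exist because connected relatively open subsets of a compact locally connected metric
space are path connected. Nearby points are joined by the limit of a sequence of chains, each
obtained from the previous one by inserting, between consecutive points, a finer chain inside a
small connected set given by uniform local connectedness; padding all inserted chains to a common
length makes the `n`-th chain, read at `⌊s k_n⌋`, converge at every parameter `s`.
-/

theorem exists_seq_of_forall_exists {α : Type*} {P : ℕ → α → Prop} {R : ℕ → α → α → Prop}
    {a : α} (h₀ : P 0 a) (h : ∀ n a, P n a → ∃ b, P (n + 1) b ∧ R n a b) :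
    ∃ f : ℕ → α, f 0 = a ∧ (∀ n, P n (f n)) ∧ ∀ n, R n (f n) (f (n + 1)) := by
  choose! g hg using h
  let f : ℕ → α := fun n => Nat.rec a g n
  have hf : ∀ n, P n (f n) := fun n => Nat.rec h₀ (fun n ih => (hg n _ ih).1) n
  exact ⟨f, rfl, hf, fun n => (hg n _ (hf n)).2⟩

theorem Nat.floor_le_floor_add_one_of_lt {R : Type*} [Field R] [LinearOrder R]
    [IsStrictOrderedRing R] [FloorSemiring R] {u v : R} (h : u < v + 1) : ⌊u⌋₊ ≤ ⌊v⌋₊ + 1 := by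
  rcases lt_or_ge u 0 with hu | hu
  · simp [Nat.floor_of_nonpos hu.le]
  · have : (⌊u⌋₊ : R) < ⌊v⌋₊ + 2 := by linarith [Nat.floor_le hu, Nat.sub_one_lt_floor v]
    have : ⌊u⌋₊ < ⌊v⌋₊ + 2 := by exact_mod_cast this
    omega

theorem uniformContinuous_of_approx {Y X : Type*} [PseudoMetricSpace Y] [PseudoMetricSpace X]
    {g : ℕ → Y → X} {γ : Y → X} {a : ℕ → ℝ} (ha : Tendsto a atTop (𝓝 0))
    (hgγ : ∀ n s, dist (g n s) (γ s) ≤ a n)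
    (hg : ∀ n, ∃ δ > 0, ∀ s s', dist s s' < δ → dist (g n s) (g n s') ≤ a n) :
    UniformContinuous γ := by
  refine Metric.uniformContinuous_iff.2 fun η hη => ?_
  obtain ⟨n, hn⟩ := (ha.eventually (gt_mem_nhds (by positivity : 0 < η / 3))).exists
  obtain ⟨δ, hδ, hgδ⟩ := hg n
  refine ⟨δ, hδ, fun {s s'} hss' => ?_⟩
  calc dist (γ s) (γ s') ≤ dist (g n s) (γ s) + dist (g n s) (g n s') + dist (g n s') (γ s') := by
        linarith [dist_triangle (γ s) (g n s) (γ s'), dist_triangle (g n s) (g n s') (γ s'),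
          dist_comm (γ s) (g n s)]
    _ < η := by linarith [hgγ n s, hgδ s s' hss', hgγ n s']

section Topological

variable {X : Type*} [TopologicalSpace X] {K : Set X}

def IsLocallyConnected (K : Set X) : Prop :=
  ∀ z ∈ K, ∀ U ∈ 𝓝 z, ∃ V ∈ 𝓝 z, V ⊆ U ∧ IsConnected (V ∩ K)

theorem IsLocallyConnected.exists_mem_connectedComponentIn (hlc : IsLocallyConnected K)
    {O D : Set X} (hO : IsOpen O) (hDK : D ⊆ K) (hKD : K ⊆ closure D) {z : X} (hz : z ∈ K ∩ O) :
    ∃ d ∈ D, d ∈ connectedComponentIn (K ∩ O) z := by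
  obtain ⟨V, hV, hVO, hVK⟩ := hlc z hz.1 O (hO.mem_nhds hz.2)
  obtain ⟨d, hdV, hdD⟩ := mem_closure_iff_nhds.1 (hKD hz.1) V hV
  have hVC : V ∩ K ⊆ connectedComponentIn (K ∩ O) z :=
    hVK.isPreconnected.subset_connectedComponentIn ⟨mem_of_mem_nhds hV, hz.1⟩
      fun u hu => ⟨hu.2, hVO hu.1⟩
  exact ⟨d, hdD, hVC ⟨hdV, hDK hdD⟩⟩

theorem Path.exists_joinedIn_first_mem {z x : X} (γ : Path z x)
    {F : Set X} (hF : IsClosed F) (hγF : ∃ t, γ t ∈ F) :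
    ∃ t, γ t ∈ F ∧ JoinedIn (insert (γ t) (range γ \ F)) z (γ t) := by
  set t₀ := sInf (γ ⁻¹' F)
  have ht₀ : γ t₀ ∈ F := (hF.preimage γ.continuous).sInf_mem hγF
  refine ⟨t₀, ht₀, JoinedIn.ofLine (f := fun s => γ.extend (t₀ * s))
    (γ.continuous_extend.comp (continuous_const_mul _)).continuousOn (by simp) (by simp) ?_⟩
  rintro _ ⟨s, hs, rfl⟩
  have hts : (t₀ : ℝ) * s ∈ Icc (0 : ℝ) 1 :=
    ⟨mul_nonneg t₀.2.1 hs.1, mul_le_one₀ t₀.2.2 hs.1 hs.2⟩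
  show γ.extend _ ∈ _
  rw [γ.extend_apply hts]
  rcases (mul_le_of_le_one_right t₀.2.1 hs.2).lt_or_eq with hlt | heq
  · exact Or.inr ⟨mem_range_self _, fun h =>
      (sInf_le (show ⟨_, hts⟩ ∈ γ ⁻¹' F from h)).not_gt (Subtype.mk_lt_mk.2 hlt)⟩
  · exact Or.inl (by simp [heq])

theorem eq_of_not_joinedIn_diff_singleton [T1Space X]
    {A : Set X} {z x p q : X} (hzx : JoinedIn K z x)
    (hA : ∀ p ∈ A, ∀ q ∈ A, p ≠ q → JoinedIn (K \ {q}) p x) (hp : p ∈ A) (hq : q ∈ A)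
    (hpz : ¬ JoinedIn (K \ {p}) z x) (hqz : ¬ JoinedIn (K \ {q}) z x) : p = q := by
  by_contra hpq
  set γ := hzx.somePath
  have hγ : ∃ t, γ t ∈ ({p, q} : Set X) := by
    by_contra! h
    exact hpz ⟨γ, fun t => ⟨hzx.somePath_mem t, fun h' => h t (Or.inl h')⟩⟩
  obtain ⟨t, ht, hzt⟩ := γ.exists_joinedIn_first_mem (toFinite _).isClosed hγ
  have hsub : ∀ r, γ t ≠ r → r ∈ ({p, q} : Set X) → insert (γ t) (range γ \ {p, q}) ⊆ K \ {r} := by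
    rintro r hr hrpq u (rfl | ⟨⟨s, rfl⟩, hs⟩)
    · exact ⟨hzx.somePath_mem t, hr⟩
    · exact ⟨hzx.somePath_mem s, fun h => hs (h ▸ hrpq)⟩
  rcases ht with h | h
  · exact hqz ((hzt.mono (hsub q (h ▸ hpq) (by simp))).trans (h ▸ hA p hp q hq hpq))
  · exact hpz ((hzt.mono (hsub p (h ▸ Ne.symm hpq) (by simp))).trans
      (h ▸ hA q hq p hp (Ne.symm hpq)))

theorem IsPreconnected.closure_diff_singleton {U : Set X}
    (hU : IsPreconnected U) {q : X} (hq : q ∉ U) : IsPreconnected (closure U \ {q}) :=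
  hU.subset_closure (fun _ hu => ⟨subset_closure hu, fun h => hq (h ▸ hu)⟩) sdiff_subset

end Topological

section Chains

variable {X : Type*} [PseudoMetricSpace X]

-- A chain of `n` steps, continued constantly at `b`, so that it can be padded to any length.
structure IsChainIn (S : Set X) (d : ℝ) (a b : X) (n : ℕ) (c : ℕ → X) : Prop where
  start : c 0 = a
  finish : ∀ i, n ≤ i → c i = b
  mem : ∀ i, c i ∈ S
  dist_lt : ∀ i, dist (c i) (c (i + 1)) < d

variable {S T K : Set X} {d d' : ℝ} {a b y w : X}

theorem IsChainIn.mono {n : ℕ} {c : ℕ → X} (h : IsChainIn S d a b n c) (hST : S ⊆ T)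
    (hdd' : d ≤ d') : IsChainIn T d' a b n c :=
  ⟨h.start, h.finish, fun i => hST (h.mem i), fun i => (h.dist_lt i).trans_le hdd'⟩

theorem isChainIn_pair (ha : a ∈ S) (hb : b ∈ S) (hab : dist a b < d) :
    IsChainIn S d a b 1 (fun i => if i = 0 then a else b) where
  start := rfl
  finish i hi := if_neg (by omega)
  mem i := by split_ifs <;> assumption
  dist_lt i := by
    rcases i with _ | i
    · simpa using hab
    · simpa using dist_nonneg.trans_lt hab

theorem IsChainIn.append {e : X} {n n' : ℕ} {c c' : ℕ → X} (h : IsChainIn S d a b n c)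
    (h' : IsChainIn S d b e n' c') :
    IsChainIn S d a e (n + n') (fun i => if i ≤ n then c i else c' (i - n)) where
  start := by simp [h.start]
  finish i hi := by
    split_ifs with hin
    · obtain rfl : i = n := by omega
      rw [h.finish i le_rfl, ← h'.start, h'.finish 0 (by omega)]
    · exact h'.finish _ (by omega)
  mem i := by split_ifs; exacts [h.mem i, h'.mem _]
  dist_lt i := by
    rcases lt_trichotomy i n with hi | rfl | hi
    · simpa [hi.le, Nat.succ_le_of_lt hi] using h.dist_lt i
    · simpa [h.finish i le_rfl, ← h'.start] using h'.dist_lt 0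
    · have : i + 1 - n = i - n + 1 := by omega
      simpa [hi.not_ge, (Nat.lt_succ_of_lt hi).not_ge, this] using h'.dist_lt (i - n)

theorem IsChainIn.dist_le {n : ℕ} {c : ℕ → X} (h : IsChainIn S d a b n c) {i j : ℕ}
    (hij : i ≤ j + 1) (hji : j ≤ i + 1) : dist (c i) (c j) ≤ d := by
  rcases lt_trichotomy i j with hlt | rfl | hlt
  · obtain rfl : j = i + 1 := by omega
    exact (h.dist_lt i).le
  · simpa using dist_nonneg.trans (h.dist_lt i).le
  · obtain rfl : i = j + 1 := by omega
    exact dist_comm (c j) _ ▸ (h.dist_lt j).le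

theorem IsChainIn.dist_floor_le {n : ℕ} {c : ℕ → X} (h : IsChainIn S d a b n c) {s s' : ℝ}
    (hss' : dist s s' < 1 / (n + 1)) : dist (c ⌊s * n⌋₊) (c ⌊s' * n⌋₊) ≤ d := by
  have hn : |s - s'| * (n + 1) < 1 := by
    rwa [Real.dist_eq, lt_div_iff₀ (by positivity)] at hss'
  have h₁ : s * n < s' * n + 1 := by
    nlinarith [le_abs_self (s - s'), abs_nonneg (s - s'), Nat.cast_nonneg (α := ℝ) n]
  have h₂ : s' * n < s * n + 1 := by
    nlinarith [neg_abs_le (s - s'), abs_nonneg (s - s'), Nat.cast_nonneg (α := ℝ) n]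
  exact h.dist_le (Nat.floor_le_floor_add_one_of_lt h₁) (Nat.floor_le_floor_add_one_of_lt h₂)

theorem IsPreconnected.exists_isChainIn (hS : IsPreconnected S) (ha : a ∈ S) (hb : b ∈ S)
    (hd : 0 < d) : ∃ n c, IsChainIn S d a b n c := by
  refine hS.induction₂' (fun a b => ∃ n c, IsChainIn S d a b n c) (fun z hz => ?_)
    (fun _ _ _ _ _ _ ⟨_, _, hc⟩ ⟨_, _, hc'⟩ => ⟨_, _, hc.append hc'⟩) ha hb
  filter_upwards [self_mem_nhdsWithin, nhdsWithin_le_nhds (ball_mem_nhds z hd)] with v hvS hv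
  exact ⟨⟨1, _, isChainIn_pair hz hvS (mem_ball'.1 hv)⟩,
    ⟨1, _, isChainIn_pair hvS hz (mem_ball.1 hv)⟩⟩

theorem IsLocallyConnected.exists_uniform (hK : IsCompact K) (hlc : IsLocallyConnected K)
    {ε : ℝ} (hε : 0 < ε) :
    ∃ δ > 0, ∀ a ∈ K, ∀ b ∈ K, dist a b < δ →
      ∃ S ⊆ K, IsPreconnected S ∧ a ∈ S ∧ b ∈ S ∧ S ⊆ ball a ε := by
  have hV : ∀ z ∈ K, ∃ V ∈ 𝓝 z, V ⊆ ball z (ε / 2) ∧ IsConnected (V ∩ K) :=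
    fun z hz => hlc z hz _ (ball_mem_nhds z (half_pos hε))
  choose! V hVz hVball hVconn using hV
  obtain ⟨δ, hδ, hcover⟩ := lebesgue_number_lemma_of_metric hK
    (c := fun z : K => interior (V z)) (fun _ => isOpen_interior)
    (fun z hz => mem_iUnion.2 ⟨⟨z, hz⟩, mem_interior_iff_mem_nhds.2 (hVz z hz)⟩)
  refine ⟨δ, hδ, fun a ha b hb hab => ?_⟩
  obtain ⟨⟨z, hz⟩, hsub⟩ := hcover a ha
  have hVa : a ∈ V z := interior_subset (hsub (mem_ball_self hδ))
  have hVb : b ∈ V z := interior_subset (hsub (mem_ball'.2 hab))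
  refine ⟨V z ∩ K, inter_subset_right, (hVconn z hz).isPreconnected, ⟨hVa, ha⟩, ⟨hVb, hb⟩,
    fun u hu => ?_⟩
  have hu := mem_ball.1 (hVball z hz hu.1)
  have ha' := mem_ball.1 (hVball z hz hVa)
  exact mem_ball.2 (by linarith [dist_triangle_right u a z])

theorem isChainIn_concat {k M : ℕ} {p : ℕ → X} {m : ℕ → ℕ} {c : ℕ → ℕ → X} (hM : 0 < M)
    (hp₀ : p 0 = y) (hpk : ∀ i, k ≤ i → p i = w)
    (hc : ∀ i, IsChainIn S d (p i) (p (i + 1)) (m i) (c i)) (hmM : ∀ i, m i ≤ M)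
    (hmk : ∀ i, k ≤ i → m i = 0) :
    IsChainIn S d y w (k * M) (fun j => c (j / M) (j % M)) := by
  have hblock : ∀ i r, r < M → (M * i + r) / M = i ∧ (M * i + r) % M = r := fun i r hr => by
    constructor <;> simp [Nat.mul_add_div hM, Nat.div_eq_of_lt hr, Nat.mod_eq_of_lt hr]
  have hsucc : ∀ j, c ((j + 1) / M) ((j + 1) % M) = c (j / M) (j % M + 1) := by
    intro j
    obtain ⟨i, r, hr, rfl⟩ : ∃ i r, r < M ∧ j = M * i + r :=
      ⟨j / M, j % M, Nat.mod_lt _ hM, (Nat.div_add_mod j M).symm⟩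
    rw [(hblock i r hr).1, (hblock i r hr).2]
    rcases (show r + 1 ≤ M from hr).lt_or_eq with hr' | rfl
    · rw [add_assoc, (hblock i (r + 1) hr').1, (hblock i (r + 1) hr').2]
    · have hj : (r + 1) * i + r + 1 = (r + 1) * (i + 1) + 0 := by ring
      rw [hj, (hblock (i + 1) 0 hM).1, (hblock (i + 1) 0 hM).2, (hc _).start,
        (hc i).finish _ (hmM i)]
  refine ⟨by simp [(hc 0).start, hp₀], fun j hj => ?_, fun j => (hc _).mem _,
    fun j => hsucc j ▸ (hc _).dist_lt _⟩
  have hk : k ≤ j / M := (Nat.le_div_iff_mul_le hM).2 hj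
  rw [(hc _).finish _ (by rw [hmk _ hk]; exact Nat.zero_le _), hpk _ (by omega)]

theorem IsChainIn.exists_refinement {k : ℕ} {p : ℕ → X} {e : ℝ} (hp : IsChainIn K d y w k p)
    (he : 0 < e) (hd' : 0 < d')
    (hulc : ∀ a ∈ K, ∀ b ∈ K, dist a b < d →
      ∃ S ⊆ K, IsPreconnected S ∧ a ∈ S ∧ b ∈ S ∧ S ⊆ ball a e) :
    ∃ M > 0, ∃ p', IsChainIn K d' y w (k * M) p' ∧ ∀ j, dist (p' j) (p (j / M)) < e := by
  have hlink : ∀ i, ∃ m c, IsChainIn (K ∩ ball (p i) e) d' (p i) (p (i + 1)) m c ∧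
      (k ≤ i → m = 0) := by
    intro i
    by_cases hi : k ≤ i
    · refine ⟨0, fun _ => p i, ⟨rfl, fun _ _ => ?_, fun _ => ⟨hp.mem i, mem_ball_self he⟩,
        fun _ => by simpa using hd'⟩, fun _ => rfl⟩
      rw [hp.finish i hi, hp.finish (i + 1) (by omega)]
    · obtain ⟨S, hSK, hS, hiS, hi'S, hSball⟩ := hulc _ (hp.mem i) _ (hp.mem (i + 1)) (hp.dist_lt i)
      obtain ⟨m, c, hc⟩ := hS.exists_isChainIn hiS hi'S hd'
      exact ⟨m, c, hc.mono (subset_inter hSK hSball) le_rfl, hi.elim⟩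
  choose m c hc hm using hlink
  set M := (Finset.range k).sup m + 1
  have hmM : ∀ i, m i ≤ M := fun i => by
    by_cases hi : k ≤ i
    · simp [hm i hi]
    · exact (Finset.le_sup (Finset.mem_range.2 (by omega))).trans (Nat.le_succ _)
  exact ⟨M, Nat.succ_pos _, _, isChainIn_concat (Nat.succ_pos _) hp.start hp.finish
    (fun i => (hc i).mono inter_subset_left le_rfl) hmM hm, fun j => mem_ball.1 ((hc _).mem _).2⟩

end Chains

section Paths

variable {X : Type*} [MetricSpace X] {K : Set X} {y w : X}

theorem joinedIn_of_refining_chains (hK : IsComplete K) {C : ℝ} {k : ℕ → ℕ} {p : ℕ → ℕ → X}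
    (hp : ∀ n, IsChainIn K (C * 2⁻¹ ^ n) y w (k n) (p n))
    (href : ∀ n, ∃ M > 0, k (n + 1) = k n * M ∧
      ∀ j, dist (p (n + 1) j) (p n (j / M)) ≤ C * 2⁻¹ ^ n)
    (h₀ : ∀ j, dist (p 0 j) y ≤ C) : JoinedIn (K ∩ closedBall y (3 * C)) y w := by
  set g : ℕ → ℝ → X := fun n s => p n ⌊s * k n⌋₊
  have hg : ∀ s n, dist (g n s) (g (n + 1) s) ≤ C * 2⁻¹ ^ n := by
    intro s n
    obtain ⟨M, hM, hk, hdist⟩ := href n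
    have : ⌊s * k (n + 1)⌋₊ / M = ⌊s * k n⌋₊ := by
      rw [← Nat.floor_div_natCast, hk]
      congr 1
      push_cast
      field_simp
    simpa [g, this, dist_comm] using hdist ⌊s * k (n + 1)⌋₊
  have hlim : ∀ s, ∃ γs ∈ K, Tendsto (fun n => g n s) atTop (𝓝 γs) := fun s =>
    cauchySeq_tendsto_of_isComplete hK (fun n => (hp n).mem _)
      (cauchySeq_of_le_geometric 2⁻¹ C (by norm_num) (hg s))
  choose γ hγK hγ using hlim
  have hgγ : ∀ n s, dist (g n s) (γ s) ≤ 2 * C * 2⁻¹ ^ n := fun n s => by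
    have := dist_le_of_le_geometric_of_tendsto 2⁻¹ C (by norm_num) (hg s) (hγ s) n
    convert this using 1
    ring
  have hosc : ∀ n, ∃ δ > 0, ∀ s s', dist s s' < δ → dist (g n s) (g n s') ≤ 2 * C * 2⁻¹ ^ n :=
    fun n => ⟨1 / (k n + 1), by positivity, fun s s' hss' => by
      have hC : 0 ≤ C * 2⁻¹ ^ n := dist_nonneg.trans ((hp n).dist_lt 0).le
      linarith [(hp n).dist_floor_le hss']⟩
  have hcont : Continuous γ := (uniformContinuous_of_approx
    (by simpa using (tendsto_pow_atTop_nhds_zero_of_lt_one (by norm_num : (0 : ℝ) ≤ 2⁻¹)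
      (by norm_num)).const_mul (2 * C)) hgγ hosc).continuous
  have hγ0 : γ 0 = y := tendsto_nhds_unique (hγ 0) (by simp [g, (hp _).start])
  have hγ1 : γ 1 = w := tendsto_nhds_unique (hγ 1) (by simp [g, (hp _).finish _ le_rfl])
  refine JoinedIn.ofLine hcont.continuousOn hγ0 hγ1 ?_
  rintro _ ⟨s, -, rfl⟩
  refine ⟨hγK s, mem_closedBall.2 ?_⟩
  have := hgγ 0 s
  rw [pow_zero, mul_one] at this
  linarith [dist_triangle_left (γ s) y (g 0 s), h₀ ⌊s * k 0⌋₊]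

theorem IsLocallyConnected.exists_joinedIn_closedBall (hK : IsCompact K)
    (hlc : IsLocallyConnected K) {ε : ℝ} (hε : 0 < ε) :
    ∃ δ > 0, ∀ y ∈ K, ∀ w ∈ K, dist y w < δ → JoinedIn (K ∩ closedBall y ε) y w := by
  set e : ℕ → ℝ := fun n => ε / 3 * 2⁻¹ ^ n
  have hmesh : ∀ n, ∃ d > 0, d ≤ e n ∧ ∀ a ∈ K, ∀ b ∈ K, dist a b < d →
      ∃ S ⊆ K, IsPreconnected S ∧ a ∈ S ∧ b ∈ S ∧ S ⊆ ball a (e n) := fun n => by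
    obtain ⟨δ, hδ, h⟩ := hlc.exists_uniform hK (by positivity : 0 < e n)
    exact ⟨min δ (e n), lt_min hδ (by positivity), min_le_right _ _,
      fun a ha b hb hab => h a ha b hb (hab.trans_le (min_le_left _ _))⟩
  choose d hd hde hdK using hmesh
  refine ⟨d 0, hd 0, fun y hy w hw hyw => ?_⟩
  obtain ⟨L, hL₀, hL, hLref⟩ := exists_seq_of_forall_exists
    (α := ℕ × (ℕ → X)) (a := (1, fun i => if i = 0 then y else w))
    (P := fun n L => IsChainIn K (d n) y w L.1 L.2)
    (R := fun n L L' => ∃ M > 0, L'.1 = L.1 * M ∧ ∀ j, dist (L'.2 j) (L.2 (j / M)) ≤ e n)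
    (isChainIn_pair hy hw hyw) fun n L hL => by
      obtain ⟨M, hM, p', hp', hdist⟩ :=
        hL.exists_refinement (by positivity) (hd (n + 1)) (hdK n)
      exact ⟨(L.1 * M, p'), hp', M, hM, rfl, fun j => (hdist j).le⟩
  have h₀ : ∀ j, dist ((L 0).2 j) y ≤ ε / 3 := by
    intro j
    rw [hL₀]
    rcases j with _ | j
    · simpa [e] using (hd 0).le.trans (hde 0)
    · simpa [e, dist_comm] using (hyw.trans_le (hde 0)).le
  have := joinedIn_of_refining_chains hK.isComplete (fun n => (hL n).mono le_rfl (hde n))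
    hLref h₀
  rwa [mul_div_cancel₀ _ three_ne_zero] at this

theorem IsLocallyConnected.joinedIn_of_isPreconnected (hK : IsCompact K)
    (hlc : IsLocallyConnected K) {O T : Set X} {a b : X} (hO : IsOpen O) (hT : IsPreconnected T)
    (hTK : T ⊆ K ∩ O) (ha : a ∈ T) (hb : b ∈ T) : JoinedIn (K ∩ O) a b := by
  set C := connectedComponentIn (K ∩ O) a with hC
  have hCKO : C ⊆ K ∩ O := connectedComponentIn_subset _ _
  have hTC : T ⊆ C := hT.subset_connectedComponentIn ha hTK
  refine JoinedIn.mono ?_ hCKO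
  refine isPreconnected_connectedComponentIn.induction₂ (fun u v => JoinedIn C u v)
    (fun z hz => ?_) (fun _ _ _ _ _ _ => JoinedIn.trans) (fun _ _ _ _ => JoinedIn.symm)
    (hTC ha) (hTC hb)
  obtain ⟨r, hr, hrO⟩ := nhds_basis_closedBall.mem_iff.1 (hO.mem_nhds (hCKO hz).2)
  obtain ⟨δ, hδ, hpath⟩ := hlc.exists_joinedIn_closedBall hK hr
  filter_upwards [self_mem_nhdsWithin, nhdsWithin_le_nhds (ball_mem_nhds z hδ)] with v hvC hv
  have hzv : JoinedIn (K ∩ O) z v := (hpath z (hCKO hz).1 v (hCKO hvC).1 (mem_ball'.1 hv)).mono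
    (inter_subset_inter_right _ hrO)
  have hrange : range hzv.somePath ⊆ C := by
    rw [hC, connectedComponentIn_eq hz]
    exact (isConnected_range hzv.somePath.continuous).isPreconnected.subset_connectedComponentIn
        ⟨0, hzv.somePath.source⟩ (range_subset_iff.2 hzv.somePath_mem)
  exact ⟨hzv.somePath, fun t => hrange (mem_range_self t)⟩

theorem IsLocallyConnected.joinedIn_closure_diff_singleton (hK : IsCompact K)
    (hlc : IsLocallyConnected K) {U : Set X} (hU : IsPreconnected U) (hUK : closure U ⊆ K)
    {p q x : X} (hp : p ∈ closure U) (hq : q ∉ U) (hx : x ∈ U) (hpq : p ≠ q) :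
    JoinedIn (K \ {q}) p x :=
  hlc.joinedIn_of_isPreconnected hK isOpen_compl_singleton (hU.closure_diff_singleton hq)
    (sdiff_subset_sdiff_left hUK) ⟨hp, hpq⟩ ⟨subset_closure hx, fun h => hq (h ▸ hx)⟩

theorem eq_of_mem_connectedComponentIn_diff {K₀ : Set X} {x : X} {π : X → X}
    (hK : IsCompact K) (hlc : IsLocallyConnected K) (hK₀ : IsClosed K₀)
    (hjoin : ∀ z ∈ K, JoinedIn K z x)
    (hA : ∀ p ∈ frontier K₀, ∀ q ∈ frontier K₀, p ≠ q → JoinedIn (K \ {q}) p x)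
    (hcut : ∀ z ∈ K \ K₀, π z ∈ frontier K₀ ∧ ¬ JoinedIn (K \ {π z}) z x)
    {z₁ z₂ : X} (hz₁ : z₁ ∈ K \ K₀) (hz₂ : z₂ ∈ connectedComponentIn (K \ K₀) z₁) :
    π z₂ = π z₁ := by
  have hz₂' : z₂ ∈ K \ K₀ := connectedComponentIn_subset _ _ hz₂
  have h21 : JoinedIn (K \ K₀) z₂ z₁ := hlc.joinedIn_of_isPreconnected hK hK₀.isOpen_compl
    isPreconnected_connectedComponentIn (connectedComponentIn_subset _ _) hz₂
    (mem_connectedComponentIn hz₁)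
  have hπz₂ : π z₂ ∈ K₀ := hK₀.frontier_subset (hcut z₂ hz₂').1
  refine eq_of_not_joinedIn_diff_singleton (hjoin z₁ hz₁.1) hA (hcut z₂ hz₂').1 (hcut z₁ hz₁).1
    (fun h => (hcut z₂ hz₂').2 ?_) (hcut z₁ hz₁).2
  exact (h21.mono (sdiff_subset_sdiff_right (singleton_subset_iff.2 hπz₂))).trans h

end Paths

theorem not_joinedIn_diff_singleton_of_isPathIn {K : Set ℂ} {a b p : ℂ}
    (h : ∀ γ : ℝ → ℂ, IsPathIn K γ a b → p ∈ γ '' Icc 0 1) : ¬ JoinedIn (K \ {p}) a b := by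
  rintro ⟨γ, hγ⟩
  have hγK : γ.extend '' Icc 0 1 ⊆ K := by
    rintro _ ⟨t, ht, rfl⟩
    rw [γ.extend_apply ht]
    exact (hγ _).1
  obtain ⟨t, ht, hpt⟩ :=
    h γ.extend ⟨γ.continuous_extend.continuousOn, γ.extend_zero, γ.extend_one, hγK⟩
  exact (hγ ⟨t, ht⟩).2 (γ.extend_apply ht ▸ hpt)

theorem projection_countably_many_values_general (K : Set ℂ)
    (hK : IsCompact K) (hconn : IsConnected K)
    (hlc : ∀ z ∈ K, ∀ U ∈ nhds z, ∃ V ∈ nhds z, V ⊆ U ∧ IsConnected (V ∩ K))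
    (x : ℂ) (hx : x ∈ interior K)
    (K₀ : Set ℂ) (hK₀ : K₀ = closure (connectedComponentIn (interior K) x))
    (π : ℂ → ℂ)
    (hproj : ∀ z' ∈ K \ K₀, π z' ∈ frontier K₀ ∧
      ∀ b ∈ interior K₀, ∀ γ : ℝ → ℂ, IsPathIn K γ z' b → π z' ∈ γ '' Set.Icc 0 1) :
    (π '' (K \ K₀)).Countable := by
  replace hlc : IsLocallyConnected K := hlc
  subst hK₀
  set U := connectedComponentIn (interior K) x
  have hUint : U ⊆ interior (closure U) :=
    interior_maximal subset_closure isOpen_interior.connectedComponentIn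
  have hUK : closure U ⊆ K :=
    closure_minimal ((connectedComponentIn_subset _ _).trans interior_subset) hK.isClosed
  have hxU : x ∈ U := mem_connectedComponentIn hx
  have hjoin : ∀ z ∈ K, JoinedIn K z x := fun z hz =>
    (hlc.joinedIn_of_isPreconnected hK isOpen_univ hconn.isPreconnected (by simp) hz
      (interior_subset hx)).mono inter_subset_left
  have hA : ∀ p ∈ frontier (closure U), ∀ q ∈ frontier (closure U), p ≠ q →
      JoinedIn (K \ {q}) p x := fun p hp q hq =>
    hlc.joinedIn_closure_diff_singleton hK isPreconnected_connectedComponentIn hUK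
      (isClosed_closure.frontier_subset hp) (fun h => hq.2 (hUint h)) hxU
  have hcut : ∀ z ∈ K \ closure U, π z ∈ frontier (closure U) ∧ ¬ JoinedIn (K \ {π z}) z x :=
    fun z hz => ⟨(hproj z hz).1,
      not_joinedIn_diff_singleton_of_isPathIn ((hproj z hz).2 x (hUint hxU))⟩
  obtain ⟨D, hDK, hD, hKD⟩ := hK.isSeparable.exists_countable_dense_subset
  refine (hD.image π).mono ?_
  rintro _ ⟨z, hz, rfl⟩
  obtain ⟨d, hdD, hdz⟩ :=
    hlc.exists_mem_connectedComponentIn isClosed_closure.isOpen_compl hDK hKD hz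
  exact ⟨d, hdD,
    eq_of_mem_connectedComponentIn_diff hK hlc isClosed_closure hjoin hA hcut hz hdz⟩

/-- Let `K ⊂ ℂ` be compact, connected, full and locally connected, `K₀` the closure of a
connected component of the interior of `K`, and `π` the canonical projection of `K` onto
`K₀`: it fixes `K₀` and sends each `z' ∈ K ∖ K₀` to a point of `∂K₀` through which every
path in `K` from `z'` into the interior of `K₀` passes. Then `π` takes at most countably
many values on `K ∖ K₀`. -/
theorem projection_countably_many_values (K : Set ℂ)
    (hK : IsCompact K) (hconn : IsConnected K) (hfull : IsFull K)
    (hlc : ∀ z ∈ K, ∀ U ∈ nhds z, ∃ V ∈ nhds z, V ⊆ U ∧ IsConnected (V ∩ K))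
    (x : ℂ) (hx : x ∈ interior K)
    (K₀ : Set ℂ) (hK₀ : K₀ = closure (connectedComponentIn (interior K) x))
    (π : ℂ → ℂ)
    (hfix : ∀ w ∈ K₀, π w = w)
    (hproj : ∀ z' ∈ K \ K₀, π z' ∈ frontier K₀ ∧
      ∀ b ∈ interior K₀, ∀ γ : ℝ → ℂ, IsPathIn K γ z' b → π z' ∈ γ '' Set.Icc 0 1) :
    (π '' (K \ K₀)).Countable :=
  projection_countably_many_values_general K hK hconn hlc x hx K₀ hK₀ π hproj
end

section
/- Let K ⊂ ℂ be compact, connected, full, and locally connected. For any point z ∈ K, the number of connected components of K ∖ {z} is countable. -/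
open Set Metric Filter Topology

/-- Let `K ⊂ ℂ` be compact, connected, full and locally connected. For any `z ∈ K`, the
collection of connected components of `K ∖ {z}` is countable. -/
theorem countably_many_branches (K : Set ℂ)
    (hK : IsCompact K) (hconn : IsConnected K) (hfull : IsFull K)
    (hlc : ∀ w ∈ K, ∀ U ∈ nhds w, ∃ V ∈ nhds w, V ⊆ U ∧ IsConnected (V ∩ K))
    (z : ℂ) (hz : z ∈ K) :
    {C : Set ℂ | ∃ w ∈ K \ {z}, C = connectedComponentIn (K \ {z}) w}.Countable := by
  obtain ⟨D, hDsub, hDcnt, hDdense⟩ := EMetric.subset_countable_closure_of_compact hK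
  apply Set.Countable.mono _ (hDcnt.image (fun d => connectedComponentIn (K \ {z}) d))
  rintro C ⟨w, ⟨hwK, hwz⟩, rfl⟩
  have hwz' : w ≠ z := hwz
  obtain ⟨V, hV, hVz, hVconn⟩ := hlc w hwK {z}ᶜ (compl_singleton_mem_nhds hwz')
  have hsub : V ∩ K ⊆ K \ {z} := fun x ⟨hxV, hxK⟩ => ⟨hxK, hVz hxV⟩
  have hwVK : w ∈ V ∩ K := ⟨mem_of_mem_nhds hV, hwK⟩
  have hCC : V ∩ K ⊆ connectedComponentIn (K \ {z}) w :=
    hVconn.isPreconnected.subset_connectedComponentIn hwVK hsub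
  obtain ⟨d, hdV, hdD⟩ := mem_closure_iff_nhds.mp (hDdense hwK) V hV
  have hdC : d ∈ connectedComponentIn (K \ {z}) w := hCC ⟨hdV, hDsub hdD⟩
  exact ⟨d, hdD, (connectedComponentIn_eq hdC).symm⟩
end

section
/- Let K ⊂ ℂ be compact, connected, and full, and fix a countable set Q of external angles whose rays land. Then every fiber of K is compact, connected, and full. -/
open Set Metric Filter Topology

/-- Image of the external ray of `K` at angle `θ` (in turns), where `ψ` is the
inverse of the normalized Riemann map, defined on `{|z| > 1}`. -/
noncomputable def rayImg (ψ : ℂ → ℂ) (θ : ℝ) : Set ℂ :=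
  (fun r : ℝ => ψ ((r : ℂ) * Complex.exp (2 * Real.pi * θ * Complex.I))) '' Set.Ioi 1

/-- The external ray at angle `θ` lands at `z`. -/
def Lands (ψ : ℂ → ℂ) (θ : ℝ) (z : ℂ) : Prop :=
  Filter.Tendsto (fun r : ℝ => ψ ((r : ℂ) * Complex.exp (2 * Real.pi * θ * Complex.I)))
    (nhdsWithin 1 (Set.Ioi 1)) (nhds z)

/-- `ψ` is the inverse of the normalized Riemann map of `ℂ ∖ K`: a conformal
bijection from the exterior of the closed unit disk onto `ℂ ∖ K`, tangent (up to a
positive real factor, the conformal radius) to the identity at infinity. -/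
def IsRiemannMap (K : Set ℂ) (ψ : ℂ → ℂ) : Prop :=
  Set.BijOn ψ {z : ℂ | 1 < ‖z‖} Kᶜ ∧
  DifferentiableOn ℂ ψ {z : ℂ | 1 < ‖z‖} ∧
  ∃ lam : ℝ, 0 < lam ∧
    Filter.Tendsto (fun z : ℂ => ψ z / z) (Filter.comap (fun z : ℂ => ‖z‖) Filter.atTop)
      (nhds (lam : ℂ))

/-- A separation line for `K` with respect to the angle set `Q`: either two rays
with angles in `Q` landing at a common point, or two such rays landing at distinct
points joined by a simple arc through the interior of `K`. -/
def IsSepLine (K : Set ℂ) (ψ : ℂ → ℂ) (Q : Set ℝ) (Γ : Set ℂ) : Prop :=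
  ∃ θ₁ ∈ Q, ∃ θ₂ ∈ Q, ∃ z₁ z₂ : ℂ,
    Lands ψ θ₁ z₁ ∧ Lands ψ θ₂ z₂ ∧
    (θ₁ : AddCircle (1 : ℝ)) ≠ (θ₂ : AddCircle (1 : ℝ)) ∧
    ((z₁ = z₂ ∧ Γ = rayImg ψ θ₁ ∪ rayImg ψ θ₂ ∪ {z₁}) ∨
     (z₁ ≠ z₂ ∧ ∃ σ : ℝ → ℂ,
        ContinuousOn σ (Set.Icc 0 1) ∧ Set.InjOn σ (Set.Icc 0 1) ∧
        σ 0 = z₁ ∧ σ 1 = z₂ ∧ σ '' Set.Ioo 0 1 ⊆ interior K ∧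
        Γ = rayImg ψ θ₁ ∪ rayImg ψ θ₂ ∪ σ '' Set.Icc 0 1))

/-- Two points can be separated if some separation line avoiding both puts them in
different connected components of its complement. -/
def Separates (K : Set ℂ) (ψ : ℂ → ℂ) (Q : Set ℝ) (z z' : ℂ) : Prop :=
  ∃ Γ : Set ℂ, IsSepLine K ψ Q Γ ∧ z ∉ Γ ∧ z' ∉ Γ ∧
    connectedComponentIn Γᶜ z ≠ connectedComponentIn Γᶜ z'

/-- The fiber of `z`: the connected component containing `z` of the set of points
of `K` that cannot be separated from `z`. -/
noncomputable def fiber (K : Set ℂ) (ψ : ℂ → ℂ) (Q : Set ℝ) (z : ℂ) : Set ℂ :=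
  connectedComponentIn {w | w ∈ K ∧ ¬ Separates K ψ Q z w} z

/-- Limit set of the external ray at angle `θ`. -/
noncomputable def limitSet (K : Set ℂ) (ψ : ℂ → ℂ) (θ : ℝ) : Set ℂ :=
  closure (rayImg ψ θ) ∩ K

/-- Impression of the external ray at angle `θ`. -/
noncomputable def impression (K : Set ℂ) (ψ : ℂ → ℂ) (θ : ℝ) : Set ℂ :=
  ⋂ (ε : ℝ) (_ : 0 < ε), closure (⋃ (φ : ℝ) (_ : |φ - θ| < ε), limitSet K ψ φ)

/-! Separating a point from `z` is an open condition, as separation lines are closed (`ψ` is proper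
at infinity, so a landing ray together with its landing point is closed); hence the fiber is a
component of a compact set. Let `V` be a bounded component of the complement of the fiber. As `K`
is full, `V ⊆ K`. A point of `V` separated from `z` by a line `Γ` would lie in a bounded component
of `ℂ ∖ Γ` inside `K`, whose frontier lies in `Γ ∩ K`, a point or an arc, hence a retract of the
plane. That is impossible: a map of the plane that is the identity on the frontier of a bounded set
`C` takes every value in `C`, since a circle does not contract in `ℂ ∖ {0}`. So `closure V ∪ fiber`
would be a larger connected set of points not separated from `z`. -/

open Bornology

lemma eq_of_exp_comp_eq {A : Type*} [TopologicalSpace A] [PreconnectedSpace A] {f g : A → ℂ}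
    (hf : Continuous f) (hg : Continuous g) (he : ∀ a, Complex.exp (f a) = Complex.exp (g a))
    (a : A) (ha : f a = g a) : f = g :=
  Complex.isCoveringMap_exp.eq_of_comp_eq hf hg (funext fun a => Subtype.ext (he a)) a ha

theorem exists_eq_zero_of_homotopy_const_circle {G : unitInterval × unitInterval → ℂ}
    (hG : Continuous G) (hloop : ∀ s, G (s, 0) = G (s, 1)) (hconst : ∀ t, G (0, t) = G (0, 0))
    (hcircle : ∀ t : unitInterval,
      G (1, t) = G (1, 0) * Complex.exp (2 * Real.pi * (t : ℝ) * Complex.I)) :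
    ∃ q, G q = 0 := by
  by_contra! hG0
  have cov := Complex.isCoveringMap_exp
  let H : C(unitInterval × unitInterval, {z : ℂ // z ≠ 0}) :=
    ⟨fun q => ⟨G q, hG0 q⟩, hG.subtype_mk _⟩
  have H0 : ∀ t, H (0, t) = ⟨_, (Complex.log (G (0, 0))).exp_ne_zero⟩ := fun t =>
    Subtype.ext (by simp [H, hconst t, Complex.exp_log (hG0 (0, 0))])
  -- Lift `G` through `exp`: the increment `L (s, 1) - L (s, 0)` of the lift along the `s`-th loop
  -- is constant in `s`, but it is `0` for the constant loop and `2πi` for the circle.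
  let L := cov.liftHomotopy H (.const _ (Complex.log (G (0, 0)))) H0
  have hL : ∀ q, Complex.exp (L q) = G q := fun q =>
    congrArg Subtype.val (congrFun (cov.liftHomotopy_lifts H _ H0) q)
  have hL0 : ∀ t, L (0, t) = Complex.log (G (0, 0)) := cov.liftHomotopy_zero H _ H0
  have hwind : L (1, 1) = L (1, 0) := by
    have := eq_of_exp_comp_eq (f := fun s => L (s, 1) - L (s, 0)) (g := fun _ => 0)
      (by fun_prop) continuous_const
      (fun s => by rw [Complex.exp_sub, hL, hL, ← hloop, div_self (hG0 _), Complex.exp_zero])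
      0 (by simp [hL0])
    exact sub_eq_zero.1 (congrFun this 1)
  have hcirc := eq_of_exp_comp_eq (f := fun t => L (1, t))
    (g := fun t : unitInterval => L (1, 0) + 2 * Real.pi * (t : ℝ) * Complex.I)
    (by fun_prop) (by fun_prop)
    (fun t => by rw [Complex.exp_add, hL, hL, hcircle]) 0 (by simp)
  have := congrFun hcirc 1
  simp only [hwind, Set.Icc.coe_one, Complex.ofReal_one, mul_one, left_eq_add] at this
  exact Complex.two_pi_I_ne_zero this

lemma norm_ofReal_mul_exp_two_pi_mul_I (r θ : ℝ) :
    ‖(r : ℂ) * Complex.exp (2 * Real.pi * θ * Complex.I)‖ = |r| := by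
  rw [norm_mul, Complex.norm_real, Real.norm_eq_abs, ← Complex.ofReal_ofNat,
    ← Complex.ofReal_mul, ← Complex.ofReal_mul, Complex.norm_exp_ofReal_mul_I, mul_one]

theorem exists_eq_of_continuous_of_eqOn_compl_ball {H : ℂ → ℂ} (hH : Continuous H) (p : ℂ)
    (R : ℝ) (hid : EqOn H id (ball p R)ᶜ) : ∃ w, H w = p := by
  set ρ := |R|
  have hρ : ∀ t : ℝ, p + ρ * Complex.exp (2 * Real.pi * t * Complex.I) ∈ (ball p R)ᶜ := by
    intro t
    rw [mem_compl_iff, mem_ball, dist_eq_norm, add_sub_cancel_left,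
      norm_ofReal_mul_exp_two_pi_mul_I, abs_abs, not_lt]
    exact le_abs_self R
  have hρ0 : H (p + ρ) = p + ρ := by simpa using hid (hρ 0)
  obtain ⟨q, hq⟩ := exists_eq_zero_of_homotopy_const_circle
    (G := fun q => H (p + ((q.1 : ℝ) * ρ : ℝ) *
      Complex.exp (2 * Real.pi * (q.2 : ℝ) * Complex.I)) - p)
    (by fun_prop) (fun s => by simp [Complex.exp_two_pi_mul_I]) (fun t => by simp)
    (fun t => by simp [hid (hρ t), hρ0])
  exact ⟨_, sub_eq_zero.1 hq⟩

theorem exists_eq_of_continuous_of_eqOn_frontier {C : Set ℂ} (hC : IsBounded C) {p : ℂ}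
    (hp : p ∈ C) {F : ℂ → ℂ} (hF : Continuous F) (hid : EqOn F id (frontier C)) :
    ∃ w, F w = p := by
  classical
  obtain ⟨R, hR⟩ := hC.closure.subset_ball p
  have hH : Continuous fun w => if w ∈ closure C then F w else w :=
    hF.if (fun w hw => hid (frontier_closure_subset hw)) continuous_id
  obtain ⟨w, hw⟩ := exists_eq_of_continuous_of_eqOn_compl_ball hH p R fun w hw => by
    simp [show w ∉ closure C from fun h => hw (hR h)]
  by_cases hwC : w ∈ closure C
  · exact ⟨w, by simpa [hwC] using hw⟩
  · simp only [hwC, if_false] at hw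
    exact absurd (hw ▸ subset_closure hp) hwC

def IsRetract {X : Type*} [TopologicalSpace X] (A : Set X) : Prop :=
  ∃ r : X → X, Continuous r ∧ range r ⊆ A ∧ EqOn r id A

namespace IsRetract

variable {X : Type*} [TopologicalSpace X] {A : Set X}

theorem isClosed [T2Space X] (hA : IsRetract A) : IsClosed A := by
  obtain ⟨r, hr, hrA, hid⟩ := hA
  convert isClosed_eq hr continuous_id
  exact Subset.antisymm (fun a ha => hid ha) fun w (hw : r w = w) => hw ▸ hrA (mem_range_self w)

theorem singleton (x : X) : IsRetract {x} :=
  ⟨fun _ => x, continuous_const, by simp, fun _ h => h.symm⟩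

/-- The arc is homeomorphic to `[0, 1]`, a Tietze extension space. -/
theorem image_Icc [NormalSpace X] [T2Space X] {σ : ℝ → X} (hσc : ContinuousOn σ (Icc 0 1))
    (hσi : InjOn σ (Icc 0 1)) : IsRetract (σ '' Icc 0 1) := by
  have : CompactSpace (Icc (0 : ℝ) 1) := isCompact_iff_compactSpace.1 isCompact_Icc
  let e : Icc (0 : ℝ) 1 ≃ₜ σ '' Icc 0 1 :=
    Continuous.homeoOfEquivCompactToT2 (f := Equiv.Set.imageOfInjOn σ _ hσi)
      (hσc.mapsToRestrict (mapsTo_image σ _))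
  have : TietzeExtension (σ '' Icc 0 1) := .of_homeo e.symm
  obtain ⟨g, hg⟩ := (ContinuousMap.id _).exists_restrict_eq
    (isCompact_Icc.image_of_continuousOn hσc).isClosed
  refine ⟨fun w => g w, by fun_prop, range_subset_iff.2 fun w => (g w).2, fun a ha => ?_⟩
  simpa using congrArg Subtype.val (DFunLike.congr_fun hg ⟨a, ha⟩)

end IsRetract

theorem closure_image_Ioi_subset {X : Type*} [MetricSpace X] {γ : ℝ → X} {a : ℝ} {z : X}
    (hγ : ContinuousOn γ (Ioi a)) (hz : Tendsto γ (𝓝[>] a) (𝓝 z))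
    (hinf : Tendsto γ atTop (cobounded X)) : closure (γ '' Ioi a) ⊆ insert z (γ '' Ioi a) := by
  intro y hy
  rcases eq_or_ne y z with rfl | hyz
  · exact mem_insert _ _
  -- Near `a` the curve stays near `z`, on `[b, M]` its image is compact, beyond `M` it avoids a
  -- ball around `y`.
  obtain ⟨W, V, hWo, hVo, hyW, hzV, hWV⟩ := t2_separation hyz
  obtain ⟨b, hab, hbV⟩ := mem_nhdsGT_iff_exists_Ioo_subset.1 (hz (hVo.mem_nhds hzV))
  obtain ⟨M, hM⟩ := eventually_atTop.1 (hinf (isBounded_def.1 (isBounded_ball (x := y) (r := 1))))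
  have hsplit : Ioi a ⊆ Ioo a b ∪ Icc b M ∪ Ici M := fun r (hr : a < r) => by
    by_cases hrb : r < b
    · exact Or.inl (Or.inl ⟨hr, hrb⟩)
    · by_cases hrM : r ≤ M
      · exact Or.inl (Or.inr ⟨not_lt.1 hrb, hrM⟩)
      · exact Or.inr (le_of_not_ge hrM)
  have hmid : IsClosed (γ '' Icc b M) :=
    (isCompact_Icc.image_of_continuousOn (hγ.mono fun r hr => hab.trans_le hr.1)).isClosed
  have := closure_mono (image_mono hsplit) hy
  simp only [image_union, closure_union, hmid.closure_eq, mem_union] at this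
  rcases this with (h | h) | h
  · exact absurd hyW ((hWV.symm.closure_left hWo).subset_compl_right
      (closure_mono (image_subset_iff.2 hbV) h))
  · exact Or.inr (image_mono (fun r hr => hab.trans_le hr.1) h)
  · have : closure (γ '' Ici M) ⊆ (ball y 1)ᶜ :=
      closure_minimal (image_subset_iff.2 hM) isOpen_ball.isClosed_compl
    exact absurd (mem_ball_self one_pos) (this h)

theorem mapsTo_ofReal_mul_exp_Ioi_one (θ : ℝ) :
    MapsTo (fun r : ℝ => (r : ℂ) * Complex.exp (2 * Real.pi * θ * Complex.I)) (Ioi 1)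
      {u | 1 < ‖u‖} := fun r (hr : 1 < r) => by
  show 1 < ‖_‖
  rwa [norm_ofReal_mul_exp_two_pi_mul_I, abs_of_pos (one_pos.trans hr)]

namespace IsRiemannMap

variable {K : Set ℂ} {ψ : ℂ → ℂ}

theorem rayImg_subset_compl (hψ : IsRiemannMap K ψ) (θ : ℝ) : rayImg ψ θ ⊆ Kᶜ := by
  rintro - ⟨r, hr, rfl⟩
  exact hψ.1.mapsTo (mapsTo_ofReal_mul_exp_Ioi_one θ hr)

theorem tendsto_cobounded (hψ : IsRiemannMap K ψ) : Tendsto ψ (cobounded ℂ) (cobounded ℂ) := by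
  obtain ⟨-, -, lam, hlam, hlim⟩ := hψ
  rw [comap_norm_atTop] at hlim
  rw [← tendsto_norm_atTop_iff_cobounded]
  refine ((tendsto_norm.comp hlim).pos_mul_atTop (by simpa using hlam.ne')
    tendsto_norm_cobounded_atTop).congr' ?_
  filter_upwards [eventually_ne_cobounded 0] with u hu
  simp [hu]

theorem isClosed_insert_rayImg (hψ : IsRiemannMap K ψ) {θ : ℝ} {z : ℂ} (hz : Lands ψ θ z) :
    IsClosed (insert z (rayImg ψ θ)) := by
  have hcont : ContinuousOn (fun r : ℝ => ψ ((r : ℂ) * Complex.exp (2 * Real.pi * θ * Complex.I)))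
      (Ioi 1) :=
    hψ.2.1.continuousOn.comp (by fun_prop) (mapsTo_ofReal_mul_exp_Ioi_one θ)
  have hinf : Tendsto (fun r : ℝ => ψ ((r : ℂ) * Complex.exp (2 * Real.pi * θ * Complex.I)))
      atTop (cobounded ℂ) :=
    hψ.tendsto_cobounded.comp <| tendsto_norm_atTop_iff_cobounded.1 <| by
      simpa only [norm_ofReal_mul_exp_two_pi_mul_I] using tendsto_abs_atTop_atTop
  refine isClosed_of_closure_subset ?_
  rw [insert_eq, closure_union, closure_singleton]
  exact union_subset subset_union_left
    ((closure_image_Ioi_subset hcont hz hinf).trans (insert_eq _ _).subset)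

end IsRiemannMap

section ConnectedComponents

variable {X : Type*} [TopologicalSpace X]

theorem IsClosed.connectedComponentIn {S : Set X} (hS : IsClosed S) (x : X) :
    IsClosed (connectedComponentIn S x) := by
  by_cases hx : x ∈ S
  · exact isClosed_of_closure_subset <|
      isPreconnected_connectedComponentIn.closure.subset_connectedComponentIn
        (subset_closure (mem_connectedComponentIn hx))
        (closure_minimal (connectedComponentIn_subset S x) hS)
  · simp [connectedComponentIn_eq_empty hx]

variable [LocallyConnectedSpace X]

theorem frontier_connectedComponentIn_subset {U : Set X} (hU : IsOpen U) (x : X) :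
    frontier (connectedComponentIn U x) ⊆ Uᶜ := by
  intro y hy hyU
  rw [hU.connectedComponentIn.frontier_eq] at hy
  obtain ⟨q, hqy, hqx⟩ :=
    mem_closure_iff_nhds.1 hy.1 _ (connectedComponentIn_mem_nhds (hU.mem_nhds hyU))
  exact hy.2 ((connectedComponentIn_eq hqx).trans (connectedComponentIn_eq hqy).symm ▸
    mem_connectedComponentIn hyU)

/-- If the component `V` of `Fᶜ` lay in `S`, then `closure V ∪ F` would be a connected subset of
`S` strictly larger than the component `F`. -/
theorem connectedComponentIn_compl_connectedComponentIn_not_subset [PreconnectedSpace X]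
    {S : Set X} {z w : X} (hz : z ∈ S) (hF : IsClosed (connectedComponentIn S z))
    (hw : w ∉ connectedComponentIn S z) :
    ¬ connectedComponentIn (connectedComponentIn S z)ᶜ w ⊆ S := by
  set F := connectedComponentIn S z
  set V := connectedComponentIn Fᶜ w
  intro hVS
  have hwV : w ∈ V := mem_connectedComponentIn hw
  have hzF : z ∈ F := mem_connectedComponentIn hz
  have hfr : frontier V ⊆ F := fun y hy => by
    simpa using frontier_connectedComponentIn_subset hF.isOpen_compl w hy
  obtain ⟨y, hy⟩ : (frontier V).Nonempty := by
    by_contra! hempty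
    have hV : V = univ :=
      (isClopen_iff_frontier_eq_empty.2 hempty).eq_univ ⟨w, hwV⟩
    exact connectedComponentIn_subset Fᶜ w (show z ∈ V by simp [hV]) hzF
  have hconn : IsPreconnected (closure V ∪ F) :=
    isPreconnected_connectedComponentIn.closure.union y (frontier_subset_closure hy) (hfr hy)
      isPreconnected_connectedComponentIn
  have hsub : closure V ∪ F ⊆ S := by
    rw [closure_eq_self_union_frontier]
    exact union_subset (union_subset hVS (hfr.trans (connectedComponentIn_subset _ _)))
      (connectedComponentIn_subset _ _)
  exact connectedComponentIn_subset _ _ hwV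
    (hconn.subset_connectedComponentIn (Or.inr hzF) hsub (Or.inl (subset_closure hwV)))

end ConnectedComponents

namespace IsSepLine

variable {K : Set ℂ} {ψ : ℂ → ℂ} {Q : Set ℝ} {Γ : Set ℂ}

theorem exists_eq_union (hΓ : IsSepLine K ψ Q Γ) :
    ∃ θ₁ θ₂ z₁ z₂ B, Lands ψ θ₁ z₁ ∧ Lands ψ θ₂ z₂ ∧ IsRetract B ∧ z₁ ∈ B ∧ z₂ ∈ B ∧
      Γ = rayImg ψ θ₁ ∪ rayImg ψ θ₂ ∪ B := by
  obtain ⟨θ₁, -, θ₂, -, z₁, z₂, h₁, h₂, -, ⟨rfl, rfl⟩ | ⟨-, σ, hσc, hσi, rfl, rfl, -, rfl⟩⟩ := hΓ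
  · exact ⟨θ₁, θ₂, z₁, z₁, {z₁}, h₁, h₂, .singleton z₁, rfl, rfl, rfl⟩
  · exact ⟨θ₁, θ₂, σ 0, σ 1, σ '' Icc 0 1, h₁, h₂, .image_Icc hσc hσi,
      mem_image_of_mem σ (left_mem_Icc.2 zero_le_one),
      mem_image_of_mem σ (right_mem_Icc.2 zero_le_one), rfl⟩

theorem isClosed (hψ : IsRiemannMap K ψ) (hΓ : IsSepLine K ψ Q Γ) : IsClosed Γ := by
  obtain ⟨θ₁, θ₂, z₁, z₂, B, h₁, h₂, hB, hz₁, hz₂, rfl⟩ := hΓ.exists_eq_union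
  have : rayImg ψ θ₁ ∪ rayImg ψ θ₂ ∪ B =
      insert z₁ (rayImg ψ θ₁) ∪ insert z₂ (rayImg ψ θ₂) ∪ B := by
    ext w
    simp only [mem_union, mem_insert_iff]
    constructor
    · tauto
    · rintro (((rfl | h) | (rfl | h)) | h) <;> tauto
  rw [this]
  exact ((hψ.isClosed_insert_rayImg h₁).union (hψ.isClosed_insert_rayImg h₂)).union hB.isClosed

theorem not_connectedComponentIn_subset (hK : IsClosed K) (hψ : IsRiemannMap K ψ)
    (hΓ : IsSepLine K ψ Q Γ) {x : ℂ} (hx : x ∉ Γ) (hb : IsBounded (connectedComponentIn Γᶜ x)) :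
    ¬ connectedComponentIn Γᶜ x ⊆ K := by
  intro hCK
  obtain ⟨θ₁, θ₂, z₁, z₂, B, -, -, ⟨r, hr, hrB, hid⟩, -, -, hΓB⟩ := hΓ.exists_eq_union
  have hfr : frontier (connectedComponentIn Γᶜ x) ⊆ B := fun y hy => by
    have hyΓ : y ∈ Γ := by
      simpa using frontier_connectedComponentIn_subset (hΓ.isClosed hψ).isOpen_compl x hy
    have hyK : y ∈ K := closure_minimal hCK hK (frontier_subset_closure hy)
    rw [hΓB] at hyΓ
    rcases hyΓ with (h | h) | h
    · exact absurd hyK (hψ.rayImg_subset_compl θ₁ h)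
    · exact absurd hyK (hψ.rayImg_subset_compl θ₂ h)
    · exact h
  obtain ⟨w, hw⟩ := exists_eq_of_continuous_of_eqOn_frontier hb (mem_connectedComponentIn hx) hr
    (hid.mono hfr)
  exact hx (hΓB ▸ Or.inr (hw ▸ hrB (mem_range_self w)))

end IsSepLine

section Fiber

variable {K : Set ℂ} {ψ : ℂ → ℂ} {Q : Set ℝ} {z : ℂ}

theorem separates_of_mem_connectedComponentIn {Γ : Set ℂ} (hΓ : IsSepLine K ψ Q Γ) {x y : ℂ}
    (hzΓ : z ∉ Γ) (hne : connectedComponentIn Γᶜ z ≠ connectedComponentIn Γᶜ x)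
    (hy : y ∈ connectedComponentIn Γᶜ x) : Separates K ψ Q z y :=
  ⟨Γ, hΓ, hzΓ, connectedComponentIn_subset _ _ hy, by rwa [← connectedComponentIn_eq hy]⟩

theorem isOpen_setOf_separates (hψ : IsRiemannMap K ψ) : IsOpen {w | Separates K ψ Q z w} := by
  refine isOpen_iff_mem_nhds.2 fun x hx => ?_
  obtain ⟨Γ, hΓ, hzΓ, hxΓ, hne⟩ := hx
  exact mem_of_superset
    (connectedComponentIn_mem_nhds ((hΓ.isClosed hψ).isOpen_compl.mem_nhds hxΓ))
    fun _ hy => separates_of_mem_connectedComponentIn hΓ hzΓ hne hy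

theorem fiber_subset_setOf_not_separates : fiber K ψ Q z ⊆ {w | w ∈ K ∧ ¬ Separates K ψ Q z w} :=
  connectedComponentIn_subset _ _

theorem not_separates_self : ¬ Separates K ψ Q z z := fun ⟨_, _, _, _, hne⟩ => hne rfl

theorem mem_fiber_self (hz : z ∈ K) : z ∈ fiber K ψ Q z :=
  mem_connectedComponentIn ⟨hz, not_separates_self⟩

theorem isClosed_fiber (hK : IsClosed K) (hψ : IsRiemannMap K ψ) : IsClosed (fiber K ψ Q z) :=
  (hK.inter (isOpen_setOf_separates hψ).isClosed_compl).connectedComponentIn z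

theorem isFull_fiber (hK : IsClosed K) (hfull : IsFull K) (hψ : IsRiemannMap K ψ) (hz : z ∈ K) :
    IsFull (fiber K ψ Q z) := by
  intro w hw hb
  set V := connectedComponentIn (fiber K ψ Q z)ᶜ w
  have hV : ∀ y ∈ V, connectedComponentIn (fiber K ψ Q z)ᶜ y = V := fun y hy =>
    (connectedComponentIn_eq hy).symm
  have hVK : V ⊆ K := fun y hyV => by
    by_contra hyK
    refine hfull y hyK (hb.subset ?_)
    rw [← hV y hyV]
    exact connectedComponentIn_mono y
      (compl_subset_compl.2 fun v hv => (fiber_subset_setOf_not_separates hv).1)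
  refine connectedComponentIn_compl_connectedComponentIn_not_subset
    (S := {w | w ∈ K ∧ ¬ Separates K ψ Q z w}) ⟨hz, not_separates_self⟩
    (isClosed_fiber hK hψ) hw fun y hyV => ⟨hVK hyV, ?_⟩
  rintro ⟨Γ, hΓ, hzΓ, hyΓ, hne⟩
  have hCV : connectedComponentIn Γᶜ y ⊆ V := by
    rw [← hV y hyV]
    exact isPreconnected_connectedComponentIn.subset_connectedComponentIn
      (mem_connectedComponentIn hyΓ) fun c hc hcF =>
        (fiber_subset_setOf_not_separates hcF).2
          (separates_of_mem_connectedComponentIn hΓ hzΓ hne hc)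
  exact hΓ.not_connectedComponentIn_subset hK hψ hyΓ (hb.subset hCV) (hCV.trans hVK)

end Fiber

theorem fiber_compact_connected_full_general (K : Set ℂ) (ψ : ℂ → ℂ) (Q : Set ℝ)
    (hK : IsCompact K) (hfull : IsFull K)
    (hψ : IsRiemannMap K ψ)
    (z : ℂ) (hz : z ∈ K) :
    IsCompact (fiber K ψ Q z) ∧ IsConnected (fiber K ψ Q z) ∧
      IsFull (fiber K ψ Q z) :=
  ⟨hK.of_isClosed_subset (isClosed_fiber hK.isClosed hψ)
      fun _ h => (fiber_subset_setOf_not_separates h).1,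
    ⟨⟨z, mem_fiber_self hz⟩, isPreconnected_connectedComponentIn⟩,
    isFull_fiber hK.isClosed hfull hψ hz⟩

/-- Let `K ⊂ ℂ` be compact, connected and full, with fibers defined with respect to a
countable set `Q` of external angles whose rays land. Then the fiber of every point of
`K` is compact, connected and full. -/
theorem fiber_compact_connected_full (K : Set ℂ) (ψ : ℂ → ℂ) (Q : Set ℝ)
    (hK : IsCompact K) (hconn : IsConnected K) (hfull : IsFull K)
    (hψ : IsRiemannMap K ψ) (hQ : Q.Countable)
    (hQland : ∀ θ ∈ Q, ∃ w : ℂ, Lands ψ θ w)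
    (z : ℂ) (hz : z ∈ K) :
    IsCompact (fiber K ψ Q z) ∧ IsConnected (fiber K ψ Q z) ∧
      IsFull (fiber K ψ Q z) :=
  fiber_compact_connected_full_general K ψ Q hK hfull hψ z hz
end

section
/- Let K ⊂ ℂ be compact, connected, and full, with fibers defined using a countable set Q of landing angles. If an external ray lands at a point z, its impression is contained in the fiber of z; for a ray whose angle is not in Q, the impression is contained in the fiber of any point of the impression. -/
open Set Metric Filter Topology

/-!
The impression of the ray at angle `θ` lies in the cluster set of `ψ` at `e^{2πiθ}`, the
intersection of the closures of the images of ever thinner polar rectangles at that boundary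
point. These closures are nested continua (compact because `ψ` is bounded near the unit circle),
so the cluster set is a continuum in `K` containing the impression and the landing point of the
ray. A separation line is made of two rays and a subset of `K`; if both its angles differ from
`θ` mod 1, injectivity of `ψ` makes it miss a thin sector around the ray at `θ`, and that
connected sector accumulates on every point of the cluster set, so the line separates no two of
them. The angles do differ from `θ`, either because `θ ∉ Q` or because the line avoids the
landing point of the ray at `θ`.
-/

theorem IsPreconnected.iInter_of_directed_isCompact {X ι : Type*} [TopologicalSpace X]
    [T2Space X] [Nonempty ι] {E : ι → Set X} (hdir : Directed (· ⊇ ·) E)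
    (hcomp : ∀ i, IsCompact (E i)) (hconn : ∀ i, IsPreconnected (E i)) :
    IsPreconnected (⋂ i, E i) := by
  have hclosed : IsClosed (⋂ i, E i) := isClosed_iInter fun i ↦ (hcomp i).isClosed
  have hcompact : IsCompact (⋂ i, E i) :=
    (hcomp (Classical.arbitrary ι)).of_isClosed_subset hclosed (iInter_subset _ _)
  rw [isPreconnected_iff_subset_of_fully_disjoint_closed hclosed]
  intro u v hu hv huv hdisj
  obtain ⟨u', v', hu', hv', huu', hvv', hdisj'⟩ :=
    SeparatedNhds.of_isCompact_isCompact (hcompact.inter_right hu) (hcompact.inter_right hv)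
      (hdisj.mono inter_subset_right inter_subset_right)
  obtain ⟨i, hi⟩ : ∃ i, E i ⊆ u' ∪ v' := by
    refine exists_subset_nhds_of_isCompact' hdir hcomp (fun i ↦ (hcomp i).isClosed)
      fun x hx ↦ (hu'.union hv').mem_nhds ?_
    rcases huv hx with hxu | hxv
    exacts [Or.inl (huu' ⟨hx, hxu⟩), Or.inr (hvv' ⟨hx, hxv⟩)]
  have hEi : (⋂ i, E i) ⊆ E i := iInter_subset _ i
  rcases (hconn i).subset_or_subset hu' hv' hdisj' hi with h | h
  · refine Or.inl fun x hx ↦ (huv hx).resolve_right fun hxv ↦ ?_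
    exact hdisj'.le_bot ⟨h (hEi hx), hvv' ⟨hx, hxv⟩⟩
  · refine Or.inr fun x hx ↦ (huv hx).resolve_left fun hxu ↦ ?_
    exact hdisj'.le_bot ⟨huu' ⟨hx, hxu⟩, h (hEi hx)⟩

theorem connectedComponentIn_eq_of_mem_closure {X : Type*} [TopologicalSpace X] {S F : Set X}
    {x y : X} (hS : IsPreconnected S) (hSF : S ⊆ F) (hx : x ∈ closure S) (hy : y ∈ closure S)
    (hxF : x ∈ F) (hyF : y ∈ F) : connectedComponentIn F x = connectedComponentIn F y := by
  have hT : IsPreconnected (insert x (insert y S)) :=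
    hS.subset_closure (subset_insert _ _ |>.trans (subset_insert _ _))
      (insert_subset hx (insert_subset hy subset_closure))
  refine connectedComponentIn_eq (hT.subset_connectedComponentIn (mem_insert _ _) ?_ ?_)
  · exact insert_subset hxF (insert_subset hyF hSF)
  · exact mem_insert_of_mem _ (mem_insert _ _)

theorem isPreconnected_setOf_lt_norm {R : ℝ} (hR : 0 ≤ R) :
    IsPreconnected {z : ℂ | R < ‖z‖} := by
  have : {z : ℂ | R < ‖z‖} =
      (fun p : ℝ × ℝ ↦ (p.1 : ℂ) * Complex.exp (p.2 * Complex.I)) '' (Ioi R ×ˢ univ) := by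
    ext z
    constructor
    · exact fun hz ↦ ⟨(‖z‖, Complex.arg z), ⟨hz, trivial⟩, Complex.norm_mul_exp_arg_mul_I z⟩
    · rintro ⟨⟨r, t⟩, ⟨hr, -⟩, rfl⟩
      have hr : R < r := hr
      simpa [Complex.norm_exp_ofReal_mul_I, abs_of_pos (hR.trans_lt hr)] using hr
  rw [this]
  exact (isPreconnected_Ioi.prod isPreconnected_univ).image _ (by fun_prop)

namespace ExternalRay

noncomputable def polar (r φ : ℝ) : ℂ := r * Complex.exp (2 * Real.pi * φ * Complex.I)

lemma exp_eq_toCircle (φ : ℝ) :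
    Complex.exp (2 * Real.pi * φ * Complex.I) = AddCircle.toCircle (φ : AddCircle (1 : ℝ)) := by
  rw [AddCircle.toCircle_apply_mk, Circle.coe_exp]
  push_cast
  ring_nf

lemma norm_polar {r : ℝ} (hr : 0 ≤ r) (φ : ℝ) : ‖polar r φ‖ = r := by
  simp [polar, exp_eq_toCircle, abs_of_nonneg hr, Circle.norm_coe]

lemma one_lt_norm_polar {r : ℝ} (hr : 1 < r) (φ : ℝ) : 1 < ‖polar r φ‖ := by
  rwa [norm_polar (zero_le_one.trans hr.le)]

lemma angle_eq_of_polar_eq {r r' a b : ℝ} (hr : 0 < r) (hr' : 0 < r')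
    (h : polar r a = polar r' b) : (a : AddCircle (1 : ℝ)) = b := by
  have hrr' : r = r' := by rw [← norm_polar hr.le a, h, norm_polar hr'.le]
  subst hrr'
  refine AddCircle.injective_toCircle one_ne_zero (Circle.ext ?_)
  rw [← exp_eq_toCircle, ← exp_eq_toCircle]
  exact mul_left_cancel₀ (by exact_mod_cast hr.ne') h

lemma lands_congr {ψ : ℂ → ℂ} {θ θ' : ℝ} {z : ℂ}
    (h : (θ : AddCircle (1 : ℝ)) = θ') (hz : Lands ψ θ z) : Lands ψ θ' z := by
  unfold Lands
  rwa [exp_eq_toCircle θ', ← h, ← exp_eq_toCircle]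

lemma continuous_polar : Continuous fun p : ℝ × ℝ ↦ polar p.1 p.2 := by
  unfold polar
  fun_prop

def polarRect (I J : Set ℝ) : Set ℂ := (fun p : ℝ × ℝ ↦ polar p.1 p.2) '' I ×ˢ J

lemma polarRect_mono {I I' J J' : Set ℝ} (hI : I ⊆ I') (hJ : J ⊆ J') :
    polarRect I J ⊆ polarRect I' J' :=
  image_mono (prod_mono hI hJ)

lemma polarRect_union_left (I I' J : Set ℝ) :
    polarRect (I ∪ I') J = polarRect I J ∪ polarRect I' J := by
  rw [polarRect, union_prod, image_union]; rfl

lemma polarRect_subset_preimage_norm {I : Set ℝ} (hI : I ⊆ Ici 0) (J : Set ℝ) :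
    polarRect I J ⊆ (‖·‖) ⁻¹' I := by
  rintro - ⟨⟨r, φ⟩, ⟨hr, -⟩, rfl⟩
  simpa [norm_polar (hI hr)] using hr

lemma polarRect_subset_exterior {I : Set ℝ} (hI : I ⊆ Ioi 1) (J : Set ℝ) :
    polarRect I J ⊆ {z : ℂ | 1 < ‖z‖} :=
  (polarRect_subset_preimage_norm (hI.trans (Ioi_subset_Ici zero_le_one)) J).trans
    (preimage_mono hI)

lemma isPreconnected_polarRect {I J : Set ℝ} (hI : IsPreconnected I) (hJ : IsPreconnected J) :
    IsPreconnected (polarRect I J) :=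
  (hI.prod hJ).image _ continuous_polar.continuousOn

lemma rayImg_eq_image_polarRect (ψ : ℂ → ℂ) (θ : ℝ) :
    rayImg ψ θ = ψ '' polarRect (Ioi 1) {θ} := by
  rw [polarRect, prod_singleton, image_image, image_image]
  rfl

variable {K : Set ℂ} {ψ : ℂ → ℂ}

lemma isOpen_image_of_injOn (hinj : InjOn ψ {z : ℂ | 1 < ‖z‖})
    (hd : DifferentiableOn ℂ ψ {z : ℂ | 1 < ‖z‖}) {s : Set ℂ} (hs : s ⊆ {z : ℂ | 1 < ‖z‖})
    (hso : IsOpen s) : IsOpen (ψ '' s) := by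
  have hU : IsOpen {z : ℂ | 1 < ‖z‖} := isOpen_lt continuous_const continuous_norm
  refine ((hd.analyticOnNhd hU).is_constant_or_isOpen (isPreconnected_setOf_lt_norm zero_le_one)
    |>.resolve_left ?_) s hs hso
  rintro ⟨w, hw⟩
  have h2 : (2 : ℂ) ∈ {z : ℂ | 1 < ‖z‖} := by norm_num
  have h3 : (3 : ℂ) ∈ {z : ℂ | 1 < ‖z‖} := by norm_num
  have := hinj h2 h3 ((hw 2 h2).trans (hw 3 h3).symm)
  norm_num at this

lemma mem_closure_of_apply_mem_closure_image (hinj : InjOn ψ {z : ℂ | 1 < ‖z‖})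
    (hd : DifferentiableOn ℂ ψ {z : ℂ | 1 < ‖z‖}) {A : Set ℂ} (hA : A ⊆ {z : ℂ | 1 < ‖z‖})
    {u : ℂ} (hu : 1 < ‖u‖) (h : ψ u ∈ closure (ψ '' A)) : u ∈ closure A := by
  by_contra hucl
  have hO : IsOpen (ψ '' ((closure A)ᶜ ∩ {z : ℂ | 1 < ‖z‖})) :=
    isOpen_image_of_injOn hinj hd inter_subset_right
      (isClosed_closure.isOpen_compl.inter (isOpen_lt continuous_const continuous_norm))
  obtain ⟨-, ⟨o, ⟨ho, hoU⟩, rfl⟩, ⟨a, haA, hao⟩⟩ :=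
    _root_.mem_closure_iff.1 h _ hO ⟨u, ⟨hucl, hu⟩, rfl⟩
  exact ho (hinj (hA haA) hoU hao ▸ subset_closure haA)

lemma tendsto_norm_atTop_of_tendsto_div {f : ℂ → ℂ} {c : ℂ} (hc : c ≠ 0)
    (h : Tendsto (fun z ↦ f z / z) (comap (‖·‖) atTop) (𝓝 c)) :
    Tendsto (fun z ↦ ‖f z‖) (comap (‖·‖) atTop) atTop := by
  refine (h.norm.pos_mul_atTop (norm_pos_iff.2 hc) tendsto_comap).congr' ?_
  filter_upwards [tendsto_comap.eventually_gt_atTop 0] with z hz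
  rw [← norm_mul, div_mul_cancel₀ _ (norm_pos_iff.1 hz)]

lemma exists_forall_lt_norm {f : ℂ → ℂ} (h : Tendsto (fun z ↦ ‖f z‖) (comap (‖·‖) atTop) atTop)
    (M : ℝ) : ∃ R, ∀ z : ℂ, R ≤ ‖z‖ → M < ‖f z‖ := by
  obtain ⟨R, -, hR⟩ := (atTop_basis.comap _).eventually_iff.1 (h.eventually_gt_atTop M)
  exact ⟨R, fun z hz ↦ hR hz⟩

lemma isBounded_image_annulus (hinj : InjOn ψ {z : ℂ | 1 < ‖z‖})
    (hd : DifferentiableOn ℂ ψ {z : ℂ | 1 < ‖z‖}) (hsurj : SurjOn ψ {z : ℂ | 1 < ‖z‖} Kᶜ)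
    (hK : Bornology.IsBounded K)
    (hgrow : Tendsto (fun z ↦ ‖ψ z‖) (comap (‖·‖) atTop) atTop) {ρ : ℝ} (hρ : 1 < ρ) :
    Bornology.IsBounded (ψ '' {z : ℂ | 1 < ‖z‖ ∧ ‖z‖ ≤ ρ}) := by
  have hsph : sphere (0 : ℂ) ρ ⊆ {z : ℂ | 1 < ‖z‖} := fun z hz ↦
    show 1 < ‖z‖ from (mem_sphere_zero_iff_norm.1 hz).symm ▸ hρ
  have hsphc : IsCompact (ψ '' sphere 0 ρ) :=
    (isCompact_sphere 0 ρ).image_of_continuousOn (hd.continuousOn.mono hsph)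
  obtain ⟨R, hR0, hR⟩ := (hK.union hsphc.isBounded).subset_closedBall_lt 0 0
  set A : Set ℂ := {z | ρ < ‖z‖}
  have hAU : A ⊆ {z : ℂ | 1 < ‖z‖} := fun z hz ↦ hρ.trans hz
  -- Connectedness of `{R < ‖w‖}` forces it into `ψ '' A`, since `ψ` maps the circle `‖z‖ = ρ`
  -- into the disc of radius `R`.
  have hVA : {w : ℂ | R < ‖w‖} ⊆ ψ '' A := by
    refine (isPreconnected_setOf_lt_norm hR0.le).subset_of_closure_inter_subset
      (isOpen_image_of_injOn hinj hd hAU (isOpen_lt continuous_const continuous_norm)) ?_ ?_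
    · obtain ⟨R₁, hR₁⟩ := exists_forall_lt_norm hgrow R
      have hv : ‖((max R₁ (ρ + 1) : ℝ) : ℂ)‖ = max R₁ (ρ + 1) := by
        rw [Complex.norm_real, Real.norm_of_nonneg (by linarith [le_max_right R₁ (ρ + 1)])]
      refine ⟨_, hR₁ _ (hv ▸ le_max_left _ _), _, ?_, rfl⟩
      show ρ < _
      linarith [hv ▸ le_max_right R₁ (ρ + 1)]
    · rintro w ⟨hwcl, hwR⟩
      have hwK : w ∉ K := fun hwK ↦ (mem_closedBall_zero_iff.1 (hR (Or.inl hwK))).not_gt hwR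
      obtain ⟨u, hu, rfl⟩ := hsurj hwK
      have hρu : ρ ≤ ‖u‖ := closure_lt_subset_le continuous_const continuous_norm
        (mem_closure_of_apply_mem_closure_image hinj hd hAU hu hwcl)
      rcases hρu.eq_or_lt with h | h
      · have := hR (Or.inr ⟨u, mem_sphere_zero_iff_norm.2 h.symm, rfl⟩)
        exact absurd (mem_closedBall_zero_iff.1 this) (not_le.2 hwR)
      · exact ⟨u, h, rfl⟩
  refine (isBounded_closedBall (x := (0 : ℂ)) (r := R)).subset ?_
  rintro - ⟨v, hv, rfl⟩
  rw [mem_closedBall_zero_iff]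
  by_contra hvR
  obtain ⟨a, ha, hav⟩ := hVA (not_le.1 hvR)
  rw [hinj (hAU ha) hv.1 hav] at ha
  exact hv.2.not_gt ha

lemma disjoint_closure_image_setOf_le_norm (hmaps : MapsTo ψ {z : ℂ | 1 < ‖z‖} Kᶜ)
    (hd : DifferentiableOn ℂ ψ {z : ℂ | 1 < ‖z‖}) (hK : Bornology.IsBounded K)
    (hgrow : Tendsto (fun z ↦ ‖ψ z‖) (comap (‖·‖) atTop) atTop) {ρ : ℝ} (hρ : 1 < ρ) :
    Disjoint (closure (ψ '' {z : ℂ | ρ ≤ ‖z‖})) K := by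
  obtain ⟨R, hR⟩ := hK.subset_closedBall 0
  obtain ⟨R₁, hR₁⟩ := exists_forall_lt_norm hgrow (R + 1)
  set T : Set ℂ := {z | ρ ≤ ‖z‖ ∧ ‖z‖ ≤ R₁}
  have hTU : T ⊆ {z : ℂ | 1 < ‖z‖} := fun z hz ↦ hρ.trans_le hz.1
  have hTc : IsCompact T := (isCompact_closedBall (0 : ℂ) R₁).of_isClosed_subset
    ((isClosed_le continuous_const continuous_norm).inter
      (isClosed_le continuous_norm continuous_const)) fun z hz ↦ mem_closedBall_zero_iff.2 hz.2
  -- The bounded part of `{ρ ≤ ‖z‖}` has compact image in `Kᶜ`; by growth at infinity, the image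
  -- of the rest stays outside a disc containing `K`.
  have hsub : ψ '' {z | ρ ≤ ‖z‖} ⊆ ψ '' T ∪ {w | R + 1 ≤ ‖w‖} := by
    rintro - ⟨z, hz, rfl⟩
    rcases le_or_gt ‖z‖ R₁ with h | h
    exacts [Or.inl ⟨z, ⟨hz, h⟩, rfl⟩, Or.inr (hR₁ z h.le).le]
  have hC : IsClosed (ψ '' T ∪ {w | R + 1 ≤ ‖w‖}) :=
    (hTc.image_of_continuousOn (hd.continuousOn.mono hTU)).isClosed.union
      (isClosed_le continuous_const continuous_norm)
  refine (Disjoint.union_left ?_ ?_).mono_left (closure_minimal hsub hC)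
  · exact disjoint_left.2 fun _ ⟨z, hz, hzw⟩ hwK ↦ hmaps (hTU hz) (hzw ▸ hwK)
  · refine disjoint_left.2 fun w (hw : R + 1 ≤ ‖w‖) hwK ↦ ?_
    linarith [mem_closedBall_zero_iff.1 (hR hwK)]

lemma _root_.IsRiemannMap.tendsto_norm_atTop (hψ : IsRiemannMap K ψ) :
    Tendsto (fun z ↦ ‖ψ z‖) (comap (‖·‖) atTop) atTop :=
  let ⟨_, _, _, hlam, ht⟩ := hψ
  tendsto_norm_atTop_of_tendsto_div (by exact_mod_cast hlam.ne') ht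

lemma isPreconnected_image_polarRect (hd : DifferentiableOn ℂ ψ {z : ℂ | 1 < ‖z‖})
    {I J : Set ℝ} (hI : I ⊆ Ioi 1) (hIc : IsPreconnected I) (hJ : IsPreconnected J) :
    IsPreconnected (ψ '' polarRect I J) :=
  (isPreconnected_polarRect hIc hJ).image _ (hd.continuousOn.mono (polarRect_subset_exterior hI J))

/-- The cluster set of `ψ` at the boundary point `e^{2πiθ}` of the unit disc: the rectangles
`polarRect (Ioo 1 (1 + δ)) (ball θ δ)` form a neighbourhood basis of that point in
`{1 < ‖z‖}`. -/
def clusterSet (ψ : ℂ → ℂ) (θ : ℝ) : Set ℂ :=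
  ⋂ δ : Ioi (0 : ℝ), closure (ψ '' polarRect (Ioo 1 (1 + δ)) (ball θ δ))

lemma isPreconnected_clusterSet (hψ : IsRiemannMap K ψ) (hK : Bornology.IsBounded K) (θ : ℝ) :
    IsPreconnected (clusterSet ψ θ) := by
  refine IsPreconnected.iInter_of_directed_isCompact ?_ (fun δ ↦ ?_) fun δ ↦ ?_
  · intro δ₁ δ₂
    refine ⟨⟨min δ₁ δ₂, mem_Ioi.2 (lt_min δ₁.2 δ₂.2)⟩, ?_, ?_⟩ <;>
      exact closure_mono (image_mono (polarRect_mono (Ioo_subset_Ioo_right (by simp))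
        (ball_subset_ball (by simp))))
  · have hρ : (1 : ℝ) < 1 + δ := lt_add_of_pos_right 1 δ.2
    refine ((isBounded_image_annulus hψ.1.injOn hψ.2.1 hψ.1.surjOn hK hψ.tendsto_norm_atTop
      hρ).subset (image_mono ?_)).isCompact_closure
    exact (polarRect_subset_preimage_norm (Ioo_subset_Ioi_self.trans (Ioi_subset_Ici zero_le_one))
      _).trans fun z hz ↦ ⟨hz.1, hz.2.le⟩
  · exact (isPreconnected_image_polarRect hψ.2.1 Ioo_subset_Ioi_self isPreconnected_Ioo
      (convex_ball θ δ).isPreconnected).closure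

lemma clusterSet_subset (hψ : IsRiemannMap K ψ) (θ : ℝ) : clusterSet ψ θ ⊆ K := by
  intro p hp
  by_contra hpK
  obtain ⟨u, hu, rfl⟩ := hψ.1.surjOn hpK
  have hu : 1 < ‖u‖ := hu
  have hδ : 0 < (‖u‖ - 1) / 2 := by linarith
  have hucl := mem_closure_of_apply_mem_closure_image hψ.1.injOn hψ.2.1
    (polarRect_subset_exterior Ioo_subset_Ioi_self _) hu (mem_iInter.1 hp ⟨_, hδ⟩)
  have : ‖u‖ ≤ 1 + (‖u‖ - 1) / 2 :=
    closure_minimal ((polarRect_subset_preimage_norm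
      (Ioo_subset_Ioi_self.trans (Ioi_subset_Ici zero_le_one)) _).trans fun z hz ↦ hz.2.le)
      (isClosed_le continuous_norm continuous_const) hucl
  linarith

lemma mem_clusterSet_of_lands {θ : ℝ} {z : ℂ} (hz : Lands ψ θ z) : z ∈ clusterSet ψ θ := by
  refine mem_iInter.2 fun δ ↦ mem_closure_of_tendsto hz ?_
  filter_upwards [Ioo_mem_nhdsGT (lt_add_of_pos_right (1 : ℝ) δ.2)] with r hr
  exact ⟨polar r θ, ⟨(r, θ), ⟨hr, mem_ball_self δ.2⟩, rfl⟩, rfl⟩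

lemma _root_.IsRiemannMap.mem_of_lands (hψ : IsRiemannMap K ψ) {θ : ℝ} {z : ℂ}
    (hz : Lands ψ θ z) : z ∈ K :=
  clusterSet_subset hψ θ (mem_clusterSet_of_lands hz)

lemma closure_image_polarRect_inter_subset (hψ : IsRiemannMap K ψ)
    (hK : Bornology.IsBounded K) {δ : ℝ} (hδ : 0 < δ) (J : Set ℝ) :
    closure (ψ '' polarRect (Ioi 1) J) ∩ K ⊆ closure (ψ '' polarRect (Ioo 1 (1 + δ)) J) := by
  have hsplit : polarRect (Ioi 1) J ⊆ polarRect (Ioo 1 (1 + δ)) J ∪ {z | 1 + δ ≤ ‖z‖} := by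
    rw [← Ioo_union_Ici_eq_Ioi (lt_add_of_pos_right 1 hδ), polarRect_union_left]
    exact union_subset_union_right _
      (polarRect_subset_preimage_norm (Ici_subset_Ici.2 (by linarith)) J)
  rintro x ⟨hx, hxK⟩
  have : x ∈ closure (ψ '' polarRect (Ioo 1 (1 + δ)) J) ∪ closure (ψ '' {z | 1 + δ ≤ ‖z‖}) := by
    rw [← closure_union, ← image_union]
    exact closure_mono (image_mono hsplit) hx
  refine this.resolve_right fun h ↦ disjoint_left.1 ?_ h hxK
  exact disjoint_closure_image_setOf_le_norm hψ.1.mapsTo hψ.2.1 hK hψ.tendsto_norm_atTop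
    (lt_add_of_pos_right 1 hδ)

lemma impression_subset_clusterSet (hψ : IsRiemannMap K ψ) (hK : Bornology.IsBounded K)
    (θ : ℝ) : impression K ψ θ ⊆ clusterSet ψ θ := by
  intro w hw
  refine mem_iInter.2 fun δ ↦ ?_
  refine closure_minimal (iUnion₂_subset fun φ hφ ↦ ?_) isClosed_closure (mem_iInter₂.1 hw δ δ.2)
  refine (inter_subset_inter_left K (closure_mono ?_)).trans
    (closure_image_polarRect_inter_subset hψ hK δ.2 (ball θ δ))
  rw [rayImg_eq_image_polarRect]
  exact image_mono (polarRect_mono subset_rfl (singleton_subset_iff.2 hφ))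

lemma clusterSet_subset_closure_image_polarRect {θ ε : ℝ} (hε : 0 < ε) :
    clusterSet ψ θ ⊆ closure (ψ '' polarRect (Ioi 1) (ball θ ε)) := fun _ hx ↦
  closure_mono (image_mono (polarRect_mono Ioo_subset_Ioi_self subset_rfl))
    (mem_iInter.1 hx ⟨ε, hε⟩)

lemma exists_ball_forall_ne {θ θ₁ θ₂ : ℝ} (h₁ : (θ : AddCircle (1 : ℝ)) ≠ θ₁)
    (h₂ : (θ : AddCircle (1 : ℝ)) ≠ θ₂) :
    ∃ ε > 0, ∀ φ ∈ ball θ ε, (φ : AddCircle (1 : ℝ)) ≠ θ₁ ∧ (φ : AddCircle (1 : ℝ)) ≠ θ₂ := by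
  have hc := (AddCircle.continuous_mk' (1 : ℝ)).tendsto θ
  exact Metric.eventually_nhds_iff_ball.1 ((hc.eventually_ne h₁).and (hc.eventually_ne h₂))

lemma disjoint_rayImg_image_polarRect (hinj : InjOn ψ {z : ℂ | 1 < ‖z‖}) {θ : ℝ} {J : Set ℝ}
    (hJ : ∀ φ ∈ J, (φ : AddCircle (1 : ℝ)) ≠ θ) :
    Disjoint (rayImg ψ θ) (ψ '' polarRect (Ioi 1) J) := by
  refine disjoint_left.2 ?_
  rintro - ⟨r, hr, rfl⟩ ⟨-, ⟨⟨s, φ⟩, ⟨hs, hφ⟩, rfl⟩, h⟩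
  have := hinj (one_lt_norm_polar hs φ) (one_lt_norm_polar hr θ) h
  exact hJ φ hφ (angle_eq_of_polar_eq (zero_lt_one.trans hs) (zero_lt_one.trans hr) this)

lemma _root_.IsSepLine.exists_subset_union (hψ : IsRiemannMap K ψ) {Q : Set ℝ} {Γ : Set ℂ}
    (hΓ : IsSepLine K ψ Q Γ) :
    ∃ θ₁ ∈ Q, ∃ θ₂ ∈ Q, ∃ z₁ z₂ : ℂ, Lands ψ θ₁ z₁ ∧ Lands ψ θ₂ z₂ ∧ z₁ ∈ Γ ∧ z₂ ∈ Γ ∧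
      Γ ⊆ rayImg ψ θ₁ ∪ rayImg ψ θ₂ ∪ K := by
  obtain ⟨θ₁, hθ₁, θ₂, hθ₂, z₁, z₂, hl₁, hl₂, -, hcase⟩ := hΓ
  refine ⟨θ₁, hθ₁, θ₂, hθ₂, z₁, z₂, hl₁, hl₂, ?_⟩
  rcases hcase with ⟨rfl, rfl⟩ | ⟨-, σ, -, -, hσ0, hσ1, hσK, rfl⟩
  · exact ⟨Or.inr rfl, Or.inr rfl,
      union_subset_union_right _ (singleton_subset_iff.2 (hψ.mem_of_lands hl₁))⟩
  refine ⟨Or.inr ⟨0, left_mem_Icc.2 zero_le_one, hσ0⟩,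
    Or.inr ⟨1, right_mem_Icc.2 zero_le_one, hσ1⟩, union_subset_union_right _ ?_⟩
  rintro - ⟨t, ht, rfl⟩
  rcases ht.1.eq_or_lt with rfl | h0
  · exact hσ0 ▸ hψ.mem_of_lands hl₁
  rcases ht.2.eq_or_lt with rfl | h1
  · exact hσ1 ▸ hψ.mem_of_lands hl₂
  exact interior_subset (hσK ⟨t, ⟨h0, h1⟩, rfl⟩)

lemma clusterSet_subset_fiber (hψ : IsRiemannMap K ψ) (hK : Bornology.IsBounded K)
    {Q : Set ℝ} {θ : ℝ} {z : ℂ} (hz : z ∈ clusterSet ψ θ)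
    (hQ : ∀ q ∈ Q, (q : AddCircle (1 : ℝ)) = θ → Lands ψ q z) :
    clusterSet ψ θ ⊆ fiber K ψ Q z := by
  refine (isPreconnected_clusterSet hψ hK θ).subset_connectedComponentIn hz
    fun w hw ↦ ⟨clusterSet_subset hψ θ hw, ?_⟩
  rintro ⟨Γ, hΓ, hzΓ, hwΓ, hne⟩
  obtain ⟨θ₁, hθ₁, θ₂, hθ₂, z₁, z₂, hl₁, hl₂, hz₁, hz₂, hΓsub⟩ := hΓ.exists_subset_union hψ
  have hangle : ∀ q ∈ Q, ∀ z' ∈ Γ, Lands ψ q z' → (θ : AddCircle (1 : ℝ)) ≠ q :=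
    fun q hq z' hz' hl h ↦ hzΓ (tendsto_nhds_unique hl (hQ q hq h.symm) ▸ hz')
  obtain ⟨ε, hε, hball⟩ :=
    exists_ball_forall_ne (hangle θ₁ hθ₁ z₁ hz₁ hl₁) (hangle θ₂ hθ₂ z₂ hz₂ hl₂)
  have hSΓ : ψ '' polarRect (Ioi 1) (ball θ ε) ⊆ Γᶜ := by
    intro x hxS hxΓ
    rcases hΓsub hxΓ with (h | h) | h
    · exact disjoint_left.1 (disjoint_rayImg_image_polarRect hψ.1.injOn
        fun φ hφ ↦ (hball φ hφ).1) h hxS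
    · exact disjoint_left.1 (disjoint_rayImg_image_polarRect hψ.1.injOn
        fun φ hφ ↦ (hball φ hφ).2) h hxS
    · obtain ⟨v, hv, rfl⟩ := hxS
      exact hψ.1.mapsTo (polarRect_subset_exterior subset_rfl _ hv) h
  exact hne (connectedComponentIn_eq_of_mem_closure
    (isPreconnected_image_polarRect hψ.2.1 subset_rfl isPreconnected_Ioi
      (convex_ball θ ε).isPreconnected) hSΓ
    (clusterSet_subset_closure_image_polarRect hε hz)
    (clusterSet_subset_closure_image_polarRect hε hw) hzΓ hwΓ)

end ExternalRay

theorem impression_in_fiber_general (K : Set ℂ) (ψ : ℂ → ℂ) (Q : Set ℝ)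
    (hK : IsCompact K)
    (hψ : IsRiemannMap K ψ) :
    (∀ θ : ℝ, ∀ z : ℂ, Lands ψ θ z → impression K ψ θ ⊆ fiber K ψ Q z) ∧
    (∀ θ : ℝ, (∀ q ∈ Q, (θ : AddCircle (1 : ℝ)) ≠ (q : AddCircle (1 : ℝ))) →
      ∀ w ∈ impression K ψ θ, impression K ψ θ ⊆ fiber K ψ Q w) := by
  have himp := ExternalRay.impression_subset_clusterSet hψ hK.isBounded
  refine ⟨fun θ z hz ↦ ?_, fun θ hθ w hw ↦ ?_⟩
  · exact (himp θ).trans (ExternalRay.clusterSet_subset_fiber hψ hK.isBounded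
      (ExternalRay.mem_clusterSet_of_lands hz) fun q _ hq ↦ ExternalRay.lands_congr hq.symm hz)
  · exact (himp θ).trans (ExternalRay.clusterSet_subset_fiber hψ hK.isBounded (himp θ hw)
      fun q hq h ↦ absurd h.symm (hθ q hq))

/-- Let `K ⊂ ℂ` be compact, connected and full, with fibers defined with respect to a
countable set `Q` of external angles whose rays land. If an external ray lands at a
point `z`, its impression is contained in the fiber of `z`; and for a ray whose angle is
not in `Q` (mod 1), the impression is contained in the fiber of each of its points. -/
theorem impression_in_fiber (K : Set ℂ) (ψ : ℂ → ℂ) (Q : Set ℝ)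
    (hK : IsCompact K) (hconn : IsConnected K) (hfull : IsFull K)
    (hψ : IsRiemannMap K ψ) (hQ : Q.Countable)
    (hQland : ∀ θ ∈ Q, ∃ w : ℂ, Lands ψ θ w) :
    (∀ θ : ℝ, ∀ z : ℂ, Lands ψ θ z → impression K ψ θ ⊆ fiber K ψ Q z) ∧
    (∀ θ : ℝ, (∀ q ∈ Q, (θ : AddCircle (1 : ℝ)) ≠ (q : AddCircle (1 : ℝ))) →
      ∀ w ∈ impression K ψ θ, impression K ψ θ ⊆ fiber K ψ Q w) :=
  impression_in_fiber_general K ψ Q hK hψ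
end
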